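/- arXiv:1707.01138 — 5 statements merged into one kernel-verified Lean document; each statement's English description precedes it below -/
import Mathlib

section
/- Let $X$ be a rack and $k$ a commutative ring. The map $\partial : C_n(X,k) \to C_{n-1}(X,k)$ defined on basis elements by $\partial(x_1,\ldots,x_n) = \sum_{i=1}^n (-1)^i (x_1,\ldots,\widehat{x_i},\ldots,x_n) - \sum_{i=1}^n (-1)^i (x_1 \triangleleft x_i, \ldots, x_{i-1} \triangleleft x_i, \widehat{x_i}, x_{i+1}, \ldots, x_n)$ satisfies $\partial^2 = 0$. -/
/-- A rack: a set with a binary operation `act x y = x ◁ y` such that right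
translations are bijective and right self-distributivity holds. -/
structure RackS (X : Type*) where
  act : X → X → X
  bij : ∀ y : X, Function.Bijective fun x => act x y
  distrib : ∀ x y z : X, act (act x y) z = act (act x z) (act y z)

/-- The face maps `δ_i^ε : X^{n+1} → X^n` (0-based): `δ_i^0` deletes the `i`-th entry,
`δ_i^1` deletes it and acts by it on all previous entries. -/
def RackS.face {X : Type*} (R : RackS X) (ε : Bool) {n : ℕ} (i : Fin (n + 1))
    (f : Fin (n + 1) → X) : Fin n → X :=
  fun j => if ε = true ∧ (j : ℕ) < (i : ℕ)
    then R.act (f (i.succAbove j)) (f i) else f (i.succAbove j)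

/-- The rack homology boundary `∂ : C_{n+1}(X,k) → C_n(X,k)`, where
`C_n(X,k) = k[X^n]` is the free `k`-module on `X^n`, defined on basis elements by
`∂(x_1,…,x_n) = Σ_i (-1)^i [(x_1,…,x̂_i,…,x_n) - (x_1◁x_i,…,x_{i-1}◁x_i,x̂_i,…,x_n)]`
(the exponent is `i+1` here because our indexing is 0-based while the paper's is 1-based). -/
noncomputable def rackBoundary {X : Type*} (R : RackS X) (k : Type*) [CommRing k] (n : ℕ) :
    ((Fin (n + 1) → X) →₀ k) →ₗ[k] ((Fin n → X) →₀ k) :=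
  Finsupp.lift _ k _ fun f => ∑ i : Fin (n + 1),
    ((-1 : k) ^ ((i : ℕ) + 1)) •
      (Finsupp.single (R.face false i f) 1 - Finsupp.single (R.face true i f) 1)

lemma val_succAbove {n : ℕ} (i : Fin (n+1)) (k : Fin n) :
    ((i.succAbove k : Fin (n+1)) : ℕ) = if (k:ℕ) < (i:ℕ) then (k:ℕ) else (k:ℕ)+1 := by
  simp [Fin.succAbove, Fin.lt_def, apply_ite Fin.val]

lemma face_face {X : Type*} (R : RackS X) (ε η : Bool) {n : ℕ} (i j : Fin (n+1))
    (hij : (i:ℕ) ≤ (j:ℕ)) (f : Fin (n+2) → X) :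
    R.face ε i (R.face η j.succ f) = R.face η j (R.face ε i.castSucc f) := by
  funext m
  have e1 : ∀ (a b : Fin (n+2)), (a:ℕ) = (b:ℕ) → f a = f b := fun a b h => by
    rw [Fin.ext h]
  have a1 : f (j.succ.succAbove (i.succAbove m)) = f (i.castSucc.succAbove (j.succAbove m)) := by
    apply e1
    simp only [val_succAbove, Fin.val_succ, Fin.coe_castSucc]
    split_ifs <;> omega
  have a2 : f (j.succ.succAbove i) = f i.castSucc := by
    apply e1
    simp only [val_succAbove, Fin.val_succ, Fin.coe_castSucc]
    split_ifs <;> omega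
  have a3 : f (i.castSucc.succAbove j) = f j.succ := by
    apply e1
    simp only [val_succAbove, Fin.val_succ, Fin.coe_castSucc]
    split_ifs <;> omega
  simp only [RackS.face, val_succAbove, Fin.val_succ, Fin.coe_castSucc]
  cases ε <;> cases η <;>
    simp only [show (true = true) = True by simp, show (false = true) = False by simp,
      true_and, false_and, if_false, ite_false] <;>
    (try split_ifs) <;>
    first
      | omega
      | rfl
      | (rw [a1]; done)
      | (rw [a2]; done)
      | (rw [a3]; done)
      | (rw [a1, a2]; done)
      | (rw [a1, a3]; done)
      | (rw [a2, a3]; done)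
      | (rw [a1, a2, a3]; done)
      | (rw [a1, a2, a3]; exact (R.distrib _ _ _).symm)
      | (rw [a1, a2]; exact (R.distrib _ _ _).symm)
      | (rw [a1, a3]; exact (R.distrib _ _ _).symm)

lemma boundary_single {X : Type*} (R : RackS X) (k : Type*) [CommRing k] (m : ℕ)
    (f : Fin (m + 1) → X) :
    rackBoundary R k m (Finsupp.single f 1) = ∑ i : Fin (m + 1),
      ((-1 : k) ^ ((i : ℕ) + 1)) •
        (Finsupp.single (R.face false i f) 1 - Finsupp.single (R.face true i f) 1) := by
  simp [rackBoundary, Finsupp.lift_apply, Finsupp.sum_single_index]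

lemma sub_eq_bool_sum {k M : Type*} [CommRing k] [AddCommGroup M] [Module k M] (v : Bool → M) :
    v false - v true = ∑ b : Bool, (if b then (-1 : k) else 1) • v b := by
  rw [Fintype.sum_bool]
  simp [sub_eq_add_neg, add_comm]

set_option maxHeartbeats 1000000 in
/-- The rack boundary squares to zero: `∂ ∘ ∂ = 0`. -/
theorem rackBoundary_squared {X : Type*} (R : RackS X) (k : Type*) [CommRing k] (n : ℕ) :
    (rackBoundary R k n).comp (rackBoundary R k (n + 1)) = 0 := by
  classical
  apply Finsupp.lhom_ext
  intro f b
  rw [LinearMap.comp_apply, LinearMap.zero_apply]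
  have hb : Finsupp.single f b = b • Finsupp.single f 1 := by
    rw [Finsupp.smul_single, smul_eq_mul, mul_one]
  rw [hb, map_smul, map_smul]
  set sg : Bool → k := fun ε => if ε then (-1 : k) else 1 with hsg
  set F : Fin (n + 2) × Bool × Fin (n + 1) × Bool → ((Fin n → X) →₀ k) :=
    fun p => ((-1 : k) ^ ((p.1 : ℕ) + 1) * (sg p.2.1 * ((-1 : k) ^ ((p.2.2.1 : ℕ) + 1)
      * sg p.2.2.2))) • Finsupp.single (R.face p.2.2.2 p.2.2.1 (R.face p.2.1 p.1 f)) 1 with hF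
  have key : rackBoundary R k n (rackBoundary R k (n + 1) (Finsupp.single f 1))
      = ∑ p : Fin (n + 2) × Bool × Fin (n + 1) × Bool, F p := by
    rw [boundary_single, map_sum, Fintype.sum_prod_type]
    refine Finset.sum_congr rfl fun j _ => ?_
    rw [map_smul, map_sub, boundary_single, boundary_single,
      sub_eq_bool_sum (k := k) (fun η => ∑ i : Fin (n + 1),
        ((-1 : k) ^ ((i : ℕ) + 1)) • (Finsupp.single (R.face false i (R.face η j f)) 1
          - Finsupp.single (R.face true i (R.face η j f)) 1))]
    rw [Finset.smul_sum, Fintype.sum_prod_type]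
    refine Finset.sum_congr rfl fun η _ => ?_
    rw [Fintype.sum_prod_type, Finset.smul_sum, Finset.smul_sum]
    refine Finset.sum_congr rfl fun i _ => ?_
    rw [sub_eq_bool_sum (k := k) (fun ε => Finsupp.single (R.face ε i (R.face η j f)) 1),
      Finset.smul_sum, Finset.smul_sum, Finset.smul_sum]
    refine Finset.sum_congr rfl fun ε _ => ?_
    simp only [hF, hsg, smul_smul]
    try (congr 1; ring)
  rw [key]
  have hzero : ∑ p : Fin (n + 2) × Bool × Fin (n + 1) × Bool, F p = 0 := by
    refine Finset.sum_ninvolution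
      (fun p => if h : ((p.2.2.1 : ℕ) < (p.1 : ℕ))
        then (p.2.2.1.castSucc, p.2.2.2, ⟨(p.1 : ℕ) - 1, by omega⟩, p.2.1)
        else (p.2.2.1.succ, p.2.2.2, ⟨(p.1 : ℕ), by omega⟩, p.2.1))
      ?_ ?_ (fun _ => Finset.mem_univ _) ?_
    · rintro ⟨j, η, i, ε⟩
      dsimp only
      by_cases h : (i : ℕ) < (j : ℕ)
      · rw [dif_pos h]
        have hj : (⟨(j : ℕ) - 1, by omega⟩ : Fin (n + 1)).succ = j := by
          apply Fin.ext; simp; omega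
        have hface : R.face ε i (R.face η j f)
            = R.face η ⟨(j : ℕ) - 1, by omega⟩ (R.face ε i.castSucc f) := by
          conv_lhs => rw [← hj]
          exact face_face R ε η i _ (by simp; omega) f
        simp only [hF]
        rw [hface, ← add_smul]
        have hc : ((-1 : k) ^ ((j : ℕ) + 1) * (sg η * ((-1 : k) ^ ((i : ℕ) + 1) * sg ε)))
            + ((-1 : k) ^ ((i.castSucc : ℕ) + 1) * (sg ε *
              ((-1 : k) ^ (((⟨(j : ℕ) - 1, by omega⟩ : Fin (n + 1)) : ℕ) + 1) * sg η))) = 0 := by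
          simp only [Fin.coe_castSucc]
          have : (j : ℕ) + 1 = (((j : ℕ) - 1) + 1) + 1 := by omega
          rw [this, pow_succ]
          ring
        rw [hc, zero_smul]
      · rw [dif_neg h]
        have hj : ((⟨(j : ℕ), by omega⟩ : Fin (n + 1)).castSucc) = j := by
          apply Fin.ext; simp
        have hface : R.face η (⟨(j : ℕ), by omega⟩ : Fin (n + 1)) (R.face ε i.succ f)
            = R.face ε i (R.face η j f) := by
          have h2 := face_face R η ε (⟨(j : ℕ), by omega⟩ : Fin (n + 1)) i (by simp; omega) f
          refine h2.trans ?_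
          conv_lhs => rw [hj]
        simp only [hF]
        rw [hface, ← add_smul]
        have hc : ((-1 : k) ^ ((j : ℕ) + 1) * (sg η * ((-1 : k) ^ ((i : ℕ) + 1) * sg ε)))
            + ((-1 : k) ^ ((i.succ : ℕ) + 1) * (sg ε *
              ((-1 : k) ^ (((⟨(j : ℕ), by omega⟩ : Fin (n + 1)) : ℕ) + 1) * sg η))) = 0 := by
          simp only [Fin.val_succ]
          rw [show (i : ℕ) + 1 + 1 = ((i : ℕ) + 1) + 1 from rfl, pow_succ]
          ring
        rw [hc, zero_smul]
    · rintro ⟨j, η, i, ε⟩ -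
      dsimp only
      by_cases h : (i : ℕ) < (j : ℕ)
      · rw [dif_pos h]
        simp only [ne_eq, Prod.mk.injEq, Fin.ext_iff, Fin.coe_castSucc, not_and]
        intro h1; omega
      · rw [dif_neg h]
        simp only [ne_eq, Prod.mk.injEq, Fin.ext_iff, Fin.val_succ, not_and]
        intro h1; omega
    · rintro ⟨j, η, i, ε⟩
      dsimp only
      by_cases h : (i : ℕ) < (j : ℕ)
      · rw [dif_pos h]
        rw [dif_neg (by simp; omega)]
        simp [Prod.ext_iff, Fin.ext_iff]
        try omega
      · rw [dif_neg h]
        rw [dif_pos (by simp; omega)]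
        simp [Prod.ext_iff, Fin.ext_iff]
        try omega
  rw [hzero, smul_zero]
end

section
/- Let $X$ be a rack and $B = k\langle x, e_y : x,y \in X \rangle / \langle yx^y - xy,\ y e_{x^y} - e_x y \rangle$, graded by $|x| = 0$, $|e_x| = 1$. Then the unique superderivation $d$ of degree $-1$ with $d(x) = 0$ and $d(e_x) = 1 - x$ is well defined on $B$ (i.e., preserves the defining ideal) and satisfies $d^2 = 0$. -/
open scoped TensorProduct

/-- The relations `y * x^y = x * y` and `y * e_{x^y} = e_x * y` defining the
dg bialgebra `B(X)`; the left copy of `X` (via `Sum.inl`) gives the degree-zero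
generators `x`, the right copy (via `Sum.inr`) the degree-one generators `e_x`. -/
inductive Brel (k : Type*) [CommRing k] {X : Type*} (R : RackS X) :
    FreeAlgebra k (X ⊕ X) → FreeAlgebra k (X ⊕ X) → Prop
  | comm (x y : X) : Brel k R
      (FreeAlgebra.ι k (Sum.inl y) * FreeAlgebra.ι k (Sum.inl (R.act x y)))
      (FreeAlgebra.ι k (Sum.inl x) * FreeAlgebra.ι k (Sum.inl y))
  | eact (x y : X) : Brel k R
      (FreeAlgebra.ι k (Sum.inl y) * FreeAlgebra.ι k (Sum.inr (R.act x y)))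
      (FreeAlgebra.ι k (Sum.inr x) * FreeAlgebra.ι k (Sum.inl y))

/-- The algebra `B = k⟨x, e_y : x,y ∈ X⟩ / ⟨y x^y - x y, y e_{x^y} - e_x y⟩`. -/
abbrev BAlg (k : Type*) [CommRing k] {X : Type*} (R : RackS X) := RingQuot (Brel k R)

variable (k : Type*) [CommRing k] {X : Type*} (R : RackS X)

/-- The degree-zero generator `x` of `B`. -/
noncomputable def gg (x : X) : BAlg k R :=
  RingQuot.mkAlgHom k (Brel k R) (FreeAlgebra.ι k (Sum.inl x))

/-- The degree-one generator `e_x` of `B`. -/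
noncomputable def ee (x : X) : BAlg k R :=
  RingQuot.mkAlgHom k (Brel k R) (FreeAlgebra.ι k (Sum.inr x))

/-- The degree-`n` homogeneous component of `B`: the span of images of monomials in the
generators containing exactly `n` of the degree-one generators `e_x`. -/
def Bdeg (n : ℕ) : Submodule k (BAlg k R) :=
  Submodule.span k {z | ∃ l : List (X ⊕ X), l.countP (fun s => s.isRight) = n ∧
    z = (l.map (Sum.elim (gg k R) (ee k R))).prod}

/-- `d` is the superderivation of degree `-1` of `B` with `d(x) = 0`, `d(e_x) = 1 - x`:
it satisfies the graded Leibniz rule `d(ab) = d(a)b + (-1)^{|a|} a d(b)` for `a`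
homogeneous of degree `m`. -/
def IsBDeriv (d : BAlg k R →ₗ[k] BAlg k R) : Prop :=
  (∀ (m : ℕ) (a b : BAlg k R), a ∈ Bdeg k R m →
      d (a * b) = d a * b + ((-1 : k) ^ m) • (a * d b)) ∧
  (∀ x : X, d (gg k R x) = 0) ∧
  (∀ x : X, d (ee k R x) = 1 - gg k R x)

lemma gg_comm (x y : X) :
    gg k R y * gg k R (R.act x y) = gg k R x * gg k R y := by
  simpa only [map_mul, gg] using RingQuot.mkAlgHom_rel k (Brel.comm (k := k) (R := R) x y)

lemma ee_rel (x y : X) :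
    gg k R y * ee k R (R.act x y) = ee k R x * gg k R y := by
  simpa only [map_mul, gg, ee] using RingQuot.mkAlgHom_rel k (Brel.eact (k := k) (R := R) x y)

lemma balgHom_ext {C : Type*} [Semiring C] [Algebra k C] {f g : BAlg k R →ₐ[k] C}
    (h1 : ∀ x, f (gg k R x) = g (gg k R x)) (h2 : ∀ x, f (ee k R x) = g (ee k R x)) :
    f = g := by
  apply RingQuot.ringQuot_ext'
  apply FreeAlgebra.hom_ext
  funext s
  cases s with
  | inl x => simpa [gg] using h1 x
  | inr x => simpa [ee] using h2 x

/-- The parity automorphism `σ` with `σ x = x`, `σ e_x = -e_x`. -/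
noncomputable def sg : BAlg k R →ₐ[k] BAlg k R :=
  RingQuot.liftAlgHom k ⟨FreeAlgebra.lift k
      (Sum.elim (fun x => gg k R x) (fun x => - ee k R x)), by
    intro a b h
    induction h with
    | comm x y => simp [gg_comm]
    | eact x y =>
        simp only [map_mul, FreeAlgebra.lift_ι_apply, Sum.elim_inl, Sum.elim_inr]
        show gg k R y * -ee k R (R.act x y) = -ee k R x * gg k R y
        calc gg k R y * -ee k R (R.act x y)
            = -(gg k R y * ee k R (R.act x y)) := mul_neg (gg k R y) (ee k R (R.act x y))
          _ = -(ee k R x * gg k R y) := by rw [ee_rel]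
          _ = -ee k R x * gg k R y := (neg_mul (ee k R x) (gg k R y)).symm⟩

@[simp] lemma sg_gg (x : X) : sg k R (gg k R x) = gg k R x := by
  simp [sg, gg, RingQuot.liftAlgHom_mkAlgHom_apply]

@[simp] lemma sg_ee (x : X) : sg k R (ee k R x) = - ee k R x := by
  simp [sg, ee, RingQuot.liftAlgHom_mkAlgHom_apply]

lemma sg_sg (a : BAlg k R) : sg k R (sg k R a) = a := by
  have : (sg k R).comp (sg k R) = AlgHom.id k (BAlg k R) := by
    apply balgHom_ext <;> intro x <;> simp
  exact congrArg (fun f => f a) (congrArg DFunLike.coe this)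

/-- Auxiliary algebra `B ⊕ B` with product `(a,m)(a',m') = (aa', σ(a)m' + m a')`,
used to define the superderivation via the universal property. -/
@[ext] structure TAlg (k : Type*) [CommRing k] {X : Type*} (R : RackS X) where
  fst : BAlg k R
  snd : BAlg k R

namespace TAlg

variable {k R}

instance : Add (TAlg k R) := ⟨fun p q => ⟨p.fst + q.fst, p.snd + q.snd⟩⟩
instance : Zero (TAlg k R) := ⟨⟨0, 0⟩⟩
instance : Neg (TAlg k R) := ⟨fun p => ⟨-p.fst, -p.snd⟩⟩
instance : One (TAlg k R) := ⟨⟨1, 0⟩⟩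
noncomputable instance : Mul (TAlg k R) :=
  ⟨fun p q => ⟨p.fst * q.fst, sg k R p.fst * q.snd + p.snd * q.fst⟩⟩
instance : SMul k (TAlg k R) := ⟨fun c p => ⟨c • p.fst, c • p.snd⟩⟩

noncomputable instance : Ring (TAlg k R) where
  add_assoc p q r := TAlg.ext (add_assoc _ _ _) (add_assoc _ _ _)
  zero_add p := TAlg.ext (zero_add _) (zero_add _)
  add_zero p := TAlg.ext (add_zero _) (add_zero _)
  add_comm p q := TAlg.ext (add_comm _ _) (add_comm _ _)
  neg_add_cancel p := TAlg.ext (neg_add_cancel _) (neg_add_cancel _)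
  nsmul := nsmulRec
  zsmul := zsmulRec
  left_distrib p q r := TAlg.ext (mul_add _ _ _)
    (show sg k R p.fst * (q.snd + r.snd) + p.snd * (q.fst + r.fst)
        = (sg k R p.fst * q.snd + p.snd * q.fst) + (sg k R p.fst * r.snd + p.snd * r.fst) by
      rw [mul_add, mul_add]; abel)
  right_distrib p q r := TAlg.ext (add_mul _ _ _)
    (show sg k R (p.fst + q.fst) * r.snd + (p.snd + q.snd) * r.fst
        = (sg k R p.fst * r.snd + p.snd * r.fst) + (sg k R q.fst * r.snd + q.snd * r.fst) by
      rw [map_add, add_mul, add_mul]; abel)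
  zero_mul p := TAlg.ext (zero_mul _)
    (show sg k R 0 * p.snd + 0 * p.fst = 0 by rw [map_zero, zero_mul, zero_mul, add_zero])
  mul_zero p := TAlg.ext (mul_zero _)
    (show sg k R p.fst * 0 + p.snd * 0 = 0 by rw [mul_zero, mul_zero, add_zero])
  mul_assoc p q r := TAlg.ext (mul_assoc _ _ _)
    (show sg k R (p.fst * q.fst) * r.snd + (sg k R p.fst * q.snd + p.snd * q.fst) * r.fst
        = sg k R p.fst * (sg k R q.fst * r.snd + q.snd * r.fst) + p.snd * (q.fst * r.fst) by
      rw [map_mul, mul_add, add_mul, mul_assoc, mul_assoc, mul_assoc]; abel)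
  one_mul p := TAlg.ext (one_mul _)
    (show sg k R 1 * p.snd + 0 * p.fst = p.snd by
      rw [map_one, one_mul, zero_mul, add_zero])
  mul_one p := TAlg.ext (mul_one _)
    (show sg k R p.fst * 0 + p.snd * 1 = p.snd by rw [mul_zero, mul_one, zero_add])

noncomputable instance : Module k (TAlg k R) where
  one_smul p := TAlg.ext (one_smul _ _) (one_smul _ _)
  mul_smul c c' p := TAlg.ext (mul_smul _ _ _) (mul_smul _ _ _)
  smul_zero c := TAlg.ext (smul_zero _) (smul_zero _)
  smul_add c p q := TAlg.ext (smul_add _ _ _) (smul_add _ _ _)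
  add_smul c c' p := TAlg.ext (add_smul _ _ _) (add_smul _ _ _)
  zero_smul p := TAlg.ext (zero_smul _ _) (zero_smul _ _)

noncomputable instance : Algebra k (TAlg k R) :=
  Algebra.ofModule
    (fun c p q => TAlg.ext (smul_mul_assoc c p.fst q.fst)
      (show sg k R (c • p.fst) * q.snd + (c • p.snd) * q.fst
          = c • (sg k R p.fst * q.snd + p.snd * q.fst) by
        rw [map_smul, smul_mul_assoc, smul_mul_assoc, smul_add]))
    (fun c p q => TAlg.ext (mul_smul_comm c p.fst q.fst)
      (show sg k R p.fst * (c • q.snd) + p.snd * (c • q.fst)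
          = c • (sg k R p.fst * q.snd + p.snd * q.fst) by
        rw [mul_smul_comm, mul_smul_comm, smul_add]))

@[simp] lemma add_fst (p q : TAlg k R) : (p + q).fst = p.fst + q.fst := rfl
@[simp] lemma add_snd (p q : TAlg k R) : (p + q).snd = p.snd + q.snd := rfl
@[simp] lemma zero_fst : (0 : TAlg k R).fst = 0 := rfl
@[simp] lemma zero_snd : (0 : TAlg k R).snd = 0 := rfl
@[simp] lemma neg_fst (p : TAlg k R) : (-p).fst = -p.fst := rfl
@[simp] lemma neg_snd (p : TAlg k R) : (-p).snd = -p.snd := rfl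
@[simp] lemma one_fst : (1 : TAlg k R).fst = 1 := rfl
@[simp] lemma one_snd : (1 : TAlg k R).snd = 0 := rfl
@[simp] lemma mul_fst (p q : TAlg k R) : (p * q).fst = p.fst * q.fst := rfl
@[simp] lemma mul_snd (p q : TAlg k R) :
    (p * q).snd = sg k R p.fst * q.snd + p.snd * q.fst := rfl
@[simp] lemma smul_fst (c : k) (p : TAlg k R) : (c • p).fst = c • p.fst := rfl
@[simp] lemma smul_snd (c : k) (p : TAlg k R) : (c • p).snd = c • p.snd := rfl

@[simp] lemma algebraMap_fst (c : k) :
    (algebraMap k (TAlg k R) c).fst = algebraMap k (BAlg k R) c := by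
  rw [Algebra.algebraMap_eq_smul_one, Algebra.algebraMap_eq_smul_one]
  rfl

@[simp] lemma algebraMap_snd (c : k) :
    (algebraMap k (TAlg k R) c).snd = 0 := by
  rw [Algebra.algebraMap_eq_smul_one]
  show c • (1 : TAlg k R).snd = 0
  rw [one_snd, smul_zero]

/-- The first-component projection as an algebra homomorphism. -/
noncomputable def fstHom : TAlg k R →ₐ[k] BAlg k R where
  toFun p := p.fst
  map_one' := rfl
  map_mul' p q := rfl
  map_zero' := rfl
  map_add' p q := rfl
  commutes' c := algebraMap_fst c

/-- The second-component projection as a linear map. -/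
def sndLin : TAlg k R →ₗ[k] BAlg k R where
  toFun p := p.snd
  map_add' p q := rfl
  map_smul' c p := rfl

end TAlg

/-- The algebra homomorphism `B → TAlg`, `a ↦ (a, d a)`. -/
noncomputable def Phi : BAlg k R →ₐ[k] TAlg k R :=
  RingQuot.liftAlgHom k ⟨FreeAlgebra.lift k
      (Sum.elim (fun x => (⟨gg k R x, 0⟩ : TAlg k R))
        (fun x => (⟨ee k R x, 1 - gg k R x⟩ : TAlg k R))), by
    intro a b h
    induction h with
    | comm x y =>
        simp only [map_mul, FreeAlgebra.lift_ι_apply, Sum.elim_inl]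
        refine TAlg.ext ?_ ?_
        · show gg k R y * gg k R (R.act x y) = gg k R x * gg k R y
          exact gg_comm k R x y
        · show sg k R (gg k R y) * 0 + 0 * gg k R (R.act x y)
              = sg k R (gg k R x) * 0 + 0 * gg k R y
          rw [mul_zero, mul_zero, zero_mul, zero_mul]
    | eact x y =>
        simp only [map_mul, FreeAlgebra.lift_ι_apply, Sum.elim_inl, Sum.elim_inr]
        refine TAlg.ext ?_ ?_
        · show gg k R y * ee k R (R.act x y) = ee k R x * gg k R y
          exact ee_rel k R x y
        · show sg k R (gg k R y) * (1 - gg k R (R.act x y)) + 0 * ee k R (R.act x y)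
              = sg k R (ee k R x) * 0 + (1 - gg k R x) * gg k R y
          rw [sg_gg, zero_mul, add_zero, mul_zero, zero_add, mul_sub, sub_mul,
            mul_one, one_mul, gg_comm]⟩

@[simp] lemma Phi_gg (x : X) : Phi k R (gg k R x) = ⟨gg k R x, 0⟩ := by
  simp [Phi, gg, RingQuot.liftAlgHom_mkAlgHom_apply]

@[simp] lemma Phi_ee (x : X) : Phi k R (ee k R x) = ⟨ee k R x, 1 - gg k R x⟩ := by
  simp [Phi, ee, RingQuot.liftAlgHom_mkAlgHom_apply]

lemma Phi_fst (a : BAlg k R) : (Phi k R a).fst = a := by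
  have : (TAlg.fstHom).comp (Phi k R) = AlgHom.id k (BAlg k R) := by
    apply balgHom_ext <;> intro x <;> simp [TAlg.fstHom]
  exact congrArg (fun f => f a) (congrArg DFunLike.coe this)

/-- The superderivation `d`. -/
noncomputable def dd : BAlg k R →ₗ[k] BAlg k R :=
  TAlg.sndLin.comp (Phi k R).toLinearMap

@[simp] lemma dd_gg (x : X) : dd k R (gg k R x) = 0 := by
  simp [dd, TAlg.sndLin]

@[simp] lemma dd_ee (x : X) : dd k R (ee k R x) = 1 - gg k R x := by
  simp [dd, TAlg.sndLin]

@[simp] lemma dd_one : dd k R 1 = 0 := by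
  show (Phi k R 1).snd = 0
  rw [map_one]
  rfl

lemma dd_mul (a b : BAlg k R) :
    dd k R (a * b) = sg k R a * dd k R b + dd k R a * b := by
  show (Phi k R (a * b)).snd = sg k R a * (Phi k R b).snd + (Phi k R a).snd * b
  rw [map_mul, TAlg.mul_snd, Phi_fst, Phi_fst]


section BArith
lemma bneg_mul (a b : BAlg k R) : -a * b = -(a * b) := neg_mul a b
lemma bmul_neg (a b : BAlg k R) : a * -b = -(a * b) := mul_neg a b
lemma bneg_smul (c : k) (a : BAlg k R) : (-c) • a = -(c • a) := neg_smul c a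
lemma bsmul_neg (c : k) (a : BAlg k R) : c • (-a) = -(c • a) := smul_neg c a
lemma bmul_smul_comm (c : k) (a b : BAlg k R) : a * (c • b) = c • (a * b) := mul_smul_comm c a b
lemma bsmul_mul_assoc (c : k) (a b : BAlg k R) : (c • a) * b = c • (a * b) := smul_mul_assoc c a b
end BArith

/-- generators -/
noncomputable abbrev genB : X ⊕ X → BAlg k R := Sum.elim (gg k R) (ee k R)

lemma mem_Bdeg_of_list (l : List (X ⊕ X)) (n : ℕ) (h : l.countP (fun s => s.isRight) = n) :
    (l.map (genB k R)).prod ∈ Bdeg k R n :=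
  Submodule.subset_span ⟨l, h, rfl⟩

lemma one_mem_Bdeg0 : (1 : BAlg k R) ∈ Bdeg k R 0 := by
  simpa using mem_Bdeg_of_list k R [] 0 rfl

lemma gg_mem_Bdeg0 (x : X) : gg k R x ∈ Bdeg k R 0 := by
  simpa using mem_Bdeg_of_list k R [Sum.inl x] 0 rfl

lemma ee_mem_Bdeg1 (x : X) : ee k R x ∈ Bdeg k R 1 := by
  simpa using mem_Bdeg_of_list k R [Sum.inr x] 1 rfl

lemma sg_prod_list (l : List (X ⊕ X)) :
    sg k R ((l.map (genB k R)).prod)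
      = ((-1 : k) ^ (l.countP (fun s => s.isRight))) • (l.map (genB k R)).prod := by
  induction l with
  | nil => simp
  | cons s l ih =>
      cases s with
      | inl x =>
          simp only [List.map_cons, List.prod_cons, map_mul, sg_gg, Sum.elim_inl, genB, ih,
            List.countP_cons, Sum.isRight_inl, mul_smul_comm]
          norm_num
      | inr x =>
          simp only [List.map_cons, List.prod_cons, map_mul, sg_ee, Sum.elim_inr, genB, ih,
            List.countP_cons, Sum.isRight_inr]
          norm_num
          rw [bneg_mul, bsmul_neg, pow_succ, mul_neg_one, bneg_smul]

lemma sg_homog {m : ℕ} {a : BAlg k R} (h : a ∈ Bdeg k R m) :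
    sg k R a = ((-1 : k) ^ m) • a := by
  induction h using Submodule.span_induction with
  | mem z hz =>
      obtain ⟨l, hl, rfl⟩ := hz
      rw [sg_prod_list, hl]
  | zero => simp
  | add a b _ _ ha hb => rw [map_add, ha, hb, smul_add]
  | smul c a _ ha => rw [map_smul, ha, smul_comm]

lemma dd_leibniz {m : ℕ} (a b : BAlg k R) (h : a ∈ Bdeg k R m) :
    dd k R (a * b) = dd k R a * b + ((-1 : k) ^ m) • (a * dd k R b) := by
  rw [dd_mul, sg_homog k R h, bsmul_mul_assoc, add_comm]

lemma gg_mul_mem {n : ℕ} (x : X) {z : BAlg k R} (h : z ∈ Bdeg k R n) :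
    gg k R x * z ∈ Bdeg k R n := by
  induction h using Submodule.span_induction with
  | mem z hz =>
      obtain ⟨l, hl, rfl⟩ := hz
      refine Submodule.subset_span ⟨Sum.inl x :: l, ?_, ?_⟩
      · simpa using hl
      · simp
  | zero => rw [mul_zero]; exact zero_mem _
  | add a b _ _ ha hb => rw [mul_add]; exact add_mem ha hb
  | smul c a _ ha => rw [bmul_smul_comm]; exact Submodule.smul_mem _ c ha

lemma ee_mul_mem {n : ℕ} (x : X) {z : BAlg k R} (h : z ∈ Bdeg k R n) :
    ee k R x * z ∈ Bdeg k R (n + 1) := by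
  induction h using Submodule.span_induction with
  | mem z hz =>
      obtain ⟨l, hl, rfl⟩ := hz
      refine Submodule.subset_span ⟨Sum.inr x :: l, ?_, ?_⟩
      · rw [List.countP_cons_of_pos (by rfl), hl]
      · simp
  | zero => rw [mul_zero]; exact zero_mem _
  | add a b _ _ ha hb => rw [mul_add]; exact add_mem ha hb
  | smul c a _ ha => rw [bmul_smul_comm]; exact Submodule.smul_mem _ c ha

lemma dd_prod (l : List (X ⊕ X)) :
    (l.countP (fun s => s.isRight) = 0 → dd k R ((l.map (genB k R)).prod) = 0) ∧
    (∀ n : ℕ, l.countP (fun s => s.isRight) = n + 1 →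
      dd k R ((l.map (genB k R)).prod) ∈ Bdeg k R n) := by
  induction l with
  | nil => exact ⟨fun _ => by simpa using dd_one k R, fun n h => by simp at h⟩
  | cons s l ih =>
      cases s with
      | inl x =>
          have key : dd k R (((Sum.inl x :: l).map (genB k R)).prod)
              = gg k R x * dd k R ((l.map (genB k R)).prod) := by
            rw [List.map_cons, List.prod_cons]
            show dd k R (gg k R x * _) = _
            rw [dd_mul, sg_gg, dd_gg, zero_mul, add_zero]
          constructor
          · intro h
            rw [key, ih.1 (by simpa using h), mul_zero]
          · intro n h
            rw [key]
            exact gg_mul_mem k R x (ih.2 n (by simpa using h))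
      | inr x =>
          have key : dd k R (((Sum.inr x :: l).map (genB k R)).prod)
              = -(ee k R x * dd k R ((l.map (genB k R)).prod))
                + ((l.map (genB k R)).prod - gg k R x * (l.map (genB k R)).prod) := by
            rw [List.map_cons, List.prod_cons]
            show dd k R (ee k R x * _) = _
            rw [dd_mul, sg_ee, dd_ee, bneg_mul, sub_mul, one_mul]
          have hc : (Sum.inr x :: l).countP (fun s => s.isRight)
              = l.countP (fun s => s.isRight) + 1 := by rw [List.countP_cons_of_pos (by rfl)]
          constructor
          · intro h
            rw [hc] at h
            exact absurd h (Nat.succ_ne_zero _)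
          · intro n h
            rw [hc] at h
            have hl : l.countP (fun s => s.isRight) = n := Nat.succ_injective h
            rw [key]
            refine add_mem (neg_mem ?_)
              (sub_mem (mem_Bdeg_of_list k R l n hl)
                (gg_mul_mem k R x (mem_Bdeg_of_list k R l n hl)))
            cases n with
            | zero =>
                rw [ih.1 hl, mul_zero]
                exact zero_mem _
            | succ m =>
                exact ee_mul_mem k R x (ih.2 m hl)

lemma dd_Bdeg_zero {a : BAlg k R} (h : a ∈ Bdeg k R 0) : dd k R a = 0 := by
  induction h using Submodule.span_induction with
  | mem z hz =>
      obtain ⟨l, hl, rfl⟩ := hz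
      exact (dd_prod k R l).1 hl
  | zero => simp
  | add a b _ _ ha hb => rw [map_add, ha, hb, add_zero]
  | smul c a _ ha => rw [map_smul, ha, smul_zero]

lemma dd_Bdeg_succ {n : ℕ} {a : BAlg k R} (h : a ∈ Bdeg k R (n + 1)) :
    dd k R a ∈ Bdeg k R n := by
  induction h using Submodule.span_induction with
  | mem z hz =>
      obtain ⟨l, hl, rfl⟩ := hz
      exact (dd_prod k R l).2 n hl
  | zero => rw [map_zero]; exact zero_mem _
  | add a b _ _ ha hb => rw [map_add]; exact add_mem ha hb
  | smul c a _ ha => rw [map_smul]; exact Submodule.smul_mem _ c ha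

/-- `a ↦ (σ a, -σ (d a))` is an algebra homomorphism. -/
noncomputable def Psi : BAlg k R →ₐ[k] TAlg k R where
  toFun a := ⟨sg k R a, - sg k R (dd k R a)⟩
  map_one' := by
    refine TAlg.ext ?_ ?_
    · show sg k R 1 = (1 : TAlg k R).fst
      rw [map_one]; rfl
    · show -sg k R (dd k R 1) = (1 : TAlg k R).snd
      rw [dd_one, map_zero, neg_zero]; rfl
  map_mul' a b := by
    refine TAlg.ext ?_ ?_
    · show sg k R (a * b) = sg k R a * sg k R b
      rw [map_mul]
    · show -sg k R (dd k R (a * b))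
          = sg k R (sg k R a) * (-sg k R (dd k R b)) + (-sg k R (dd k R a)) * sg k R b
      rw [dd_mul, map_add, map_mul, map_mul, sg_sg, bmul_neg, bneg_mul, ← neg_add]
  map_zero' := by
    refine TAlg.ext ?_ ?_
    · show sg k R 0 = (0 : TAlg k R).fst
      rw [map_zero]; rfl
    · show -sg k R (dd k R 0) = (0 : TAlg k R).snd
      rw [map_zero, map_zero, neg_zero]; rfl
  map_add' a b := by
    refine TAlg.ext ?_ ?_
    · show sg k R (a + b) = sg k R a + sg k R b
      rw [map_add]
    · show -sg k R (dd k R (a + b)) = -sg k R (dd k R a) + -sg k R (dd k R b)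
      rw [map_add, map_add, neg_add]
  commutes' c := by
    refine TAlg.ext ?_ ?_
    · show sg k R (algebraMap k (BAlg k R) c) = (algebraMap k (TAlg k R) c).fst
      rw [AlgHom.commutes, TAlg.algebraMap_fst]
    · show -sg k R (dd k R (algebraMap k (BAlg k R) c)) = (algebraMap k (TAlg k R) c).snd
      rw [TAlg.algebraMap_snd, Algebra.algebraMap_eq_smul_one, map_smul, dd_one,
        smul_zero, map_zero, neg_zero]

lemma dd_sg (a : BAlg k R) : dd k R (sg k R a) = - sg k R (dd k R a) := by
  have key : (Phi k R).comp (sg k R) = Psi k R := by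
    apply balgHom_ext <;> intro x
    · show Phi k R (sg k R (gg k R x)) = Psi k R (gg k R x)
      rw [sg_gg, Phi_gg]
      refine TAlg.ext ?_ ?_
      · show gg k R x = sg k R (gg k R x); rw [sg_gg]
      · show (0 : BAlg k R) = -sg k R (dd k R (gg k R x))
        rw [dd_gg, map_zero, neg_zero]
    · show Phi k R (sg k R (ee k R x)) = Psi k R (ee k R x)
      rw [sg_ee, map_neg, Phi_ee]
      refine TAlg.ext ?_ ?_
      · show -(ee k R x) = sg k R (ee k R x); rw [sg_ee]
      · show -(1 - gg k R x) = -sg k R (dd k R (ee k R x))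
        rw [dd_ee, map_sub, map_one, sg_gg]
  have := congrArg (fun f => (f a).snd) (congrArg DFunLike.coe key)
  exact this

lemma dd_dd_mul (a b : BAlg k R) :
    dd k R (dd k R (a * b)) = a * dd k R (dd k R b) + dd k R (dd k R a) * b := by
  rw [dd_mul, map_add, dd_mul, dd_mul, dd_sg, sg_sg, bneg_mul]
  abel

lemma dd_dd (a : BAlg k R) : dd k R (dd k R a) = 0 := by
  obtain ⟨x, rfl⟩ := RingQuot.mkAlgHom_surjective k (Brel k R) a
  induction x using FreeAlgebra.induction with
  | grade0 c =>
      rw [AlgHom.commutes, Algebra.algebraMap_eq_smul_one, map_smul, dd_one, smul_zero, map_zero]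
  | grade1 s =>
      cases s with
      | inl x =>
          show dd k R (dd k R (gg k R x)) = 0
          rw [dd_gg, map_zero]
      | inr x =>
          show dd k R (dd k R (ee k R x)) = 0
          rw [dd_ee, map_sub, dd_one, dd_gg, sub_zero]
  | mul a b ha hb =>
      rw [map_mul, dd_dd_mul, ha, hb, mul_zero, zero_mul, add_zero]
  | add a b ha hb =>
      rw [map_add, map_add, map_add, ha, hb, add_zero]

lemma mul_mem_span_mon {A B : BAlg k R}
    (hA : A ∈ Submodule.span k {z : BAlg k R | ∃ l : List (X ⊕ X), z = (l.map (genB k R)).prod})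
    (hB : B ∈ Submodule.span k {z : BAlg k R | ∃ l : List (X ⊕ X), z = (l.map (genB k R)).prod}) :
    A * B ∈ Submodule.span k {z : BAlg k R | ∃ l : List (X ⊕ X), z = (l.map (genB k R)).prod} := by
  induction hA using Submodule.span_induction with
  | mem z hz =>
      induction hB using Submodule.span_induction with
      | mem w hw =>
          obtain ⟨l, rfl⟩ := hz
          obtain ⟨l', rfl⟩ := hw
          exact Submodule.subset_span ⟨l ++ l', by rw [List.map_append, List.prod_append]⟩
      | zero => rw [mul_zero]; exact zero_mem _
      | add u v _ _ hu hv => rw [mul_add]; exact add_mem hu hv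
      | smul c u _ hu => rw [bmul_smul_comm]; exact Submodule.smul_mem _ c hu
  | zero => rw [zero_mul]; exact zero_mem _
  | add u v _ _ hu hv => rw [add_mul]; exact add_mem hu hv
  | smul c u _ hu => rw [bsmul_mul_assoc]; exact Submodule.smul_mem _ c hu

lemma mem_span_mon (a : BAlg k R) :
    a ∈ Submodule.span k {z : BAlg k R | ∃ l : List (X ⊕ X), z = (l.map (genB k R)).prod} := by
  set S : Set (BAlg k R) := {z | ∃ l : List (X ⊕ X), z = (l.map (genB k R)).prod} with hS
  obtain ⟨x, rfl⟩ := RingQuot.mkAlgHom_surjective k (Brel k R) a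
  induction x using FreeAlgebra.induction with
  | grade0 c =>
      rw [AlgHom.commutes, Algebra.algebraMap_eq_smul_one]
      exact Submodule.smul_mem _ c (Submodule.subset_span ⟨[], by simp⟩)
  | grade1 s =>
      cases s with
      | inl x => exact Submodule.subset_span ⟨[Sum.inl x], by simp [gg]⟩
      | inr x => exact Submodule.subset_span ⟨[Sum.inr x], by simp [ee]⟩
  | mul a b ha hb =>
      rw [map_mul]
      exact mul_mem_span_mon k R ha hb
  | add a b ha hb =>
      rw [map_add]
      exact add_mem ha hb

lemma isBDeriv_one_eq_zero {d : BAlg k R →ₗ[k] BAlg k R} (hd : IsBDeriv k R d) :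
    d 1 = 0 := by
  have := hd.1 0 1 1 (one_mem_Bdeg0 k R)
  rw [one_mul, mul_one, pow_zero, one_smul, one_mul] at this
  have h2 : d 1 + d 1 = d 1 + 0 := by rw [add_zero, ← this]
  exact add_left_cancel h2

lemma isBDeriv_unique (d d' : BAlg k R →ₗ[k] BAlg k R)
    (hd : IsBDeriv k R d) (hd' : IsBDeriv k R d') : d = d' := by
  have key : ∀ l : List (X ⊕ X),
      d ((l.map (genB k R)).prod) = d' ((l.map (genB k R)).prod) := by
    intro l
    induction l with
    | nil =>
        simp only [List.map_nil, List.prod_nil]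
        rw [isBDeriv_one_eq_zero k R hd, isBDeriv_one_eq_zero k R hd']
    | cons s l ih =>
        cases s with
        | inl x =>
            rw [List.map_cons, List.prod_cons]
            show d (gg k R x * _) = d' (gg k R x * _)
            rw [hd.1 0 _ _ (gg_mem_Bdeg0 k R x), hd'.1 0 _ _ (gg_mem_Bdeg0 k R x),
              hd.2.1, hd'.2.1, ih]
        | inr x =>
            rw [List.map_cons, List.prod_cons]
            show d (ee k R x * _) = d' (ee k R x * _)
            rw [hd.1 1 _ _ (ee_mem_Bdeg1 k R x), hd'.1 1 _ _ (ee_mem_Bdeg1 k R x),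
              hd.2.2, hd'.2.2, ih]
  apply LinearMap.ext
  intro a
  induction mem_span_mon k R a using Submodule.span_induction with
  | mem z hz => obtain ⟨l, rfl⟩ := hz; exact key l
  | zero => rw [map_zero, map_zero]
  | add u v _ _ hu hv => rw [map_add, map_add, hu, hv]
  | smul c u _ hu => rw [map_smul, map_smul, hu]


/-- There is a unique superderivation `d` of degree `-1` on `B` with `d(x) = 0` and
`d(e_x) = 1 - x` (in particular it is well defined on the quotient `B`), it lowers
degrees by one, and it satisfies `d² = 0`. -/
theorem BAlg_exists_unique_differential (k : Type*) [CommRing k] {X : Type*} (R : RackS X) :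
    (∃ d : BAlg k R →ₗ[k] BAlg k R, IsBDeriv k R d ∧
      (∀ (n : ℕ) (a : BAlg k R), a ∈ Bdeg k R (n + 1) → d a ∈ Bdeg k R n) ∧
      (∀ a : BAlg k R, a ∈ Bdeg k R 0 → d a = 0) ∧
      d.comp d = 0) ∧
    (∀ d d' : BAlg k R →ₗ[k] BAlg k R, IsBDeriv k R d → IsBDeriv k R d' → d = d') := by
  constructor
  · refine ⟨dd k R, ⟨fun m a b h => dd_leibniz k R a b h, dd_gg k R, dd_ee k R⟩,
      fun n a h => dd_Bdeg_succ k R h, fun a h => dd_Bdeg_zero k R h, ?_⟩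
    apply LinearMap.ext
    intro a
    exact dd_dd k R a
  · exact isBDeriv_unique k R
end

section
/- Let $X$ be a rack and $B$ its differential graded bialgebra with $d(x)=0$, $d(e_x) = 1-x$, $\Delta(x) = x \otimes x$, $\Delta(e_x) = e_x \otimes x + 1 \otimes e_x$. Then $d$ is a coderivation with respect to $\Delta$: $\Delta \circ d = (d \otimes 1 + 1 \otimes d) \circ \Delta$ (with Koszul signs). -/
open scoped TensorProduct

variable (k : Type*) [CommRing k] {X : Type*} (R : RackS X)

/-- `μ` is the Koszul-signed multiplication on `B ⊗ B`:
`(a ⊗ b)(a' ⊗ b') = (-1)^{|b||a'|} (a a') ⊗ (b b')` for `b, a'` homogeneous. -/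
def IsKoszulMul
    (μ : BAlg k R ⊗[k] BAlg k R →ₗ[k] BAlg k R ⊗[k] BAlg k R →ₗ[k] BAlg k R ⊗[k] BAlg k R) :
    Prop :=
  ∀ (m n : ℕ) (a b a' b' : BAlg k R), b ∈ Bdeg k R m → a' ∈ Bdeg k R n →
    μ (a ⊗ₜ b) (a' ⊗ₜ b') = ((-1 : k) ^ (m * n)) • ((a * a') ⊗ₜ[k] (b * b'))

/-- `Δ : B → B ⊗ B` is the comultiplication: a unital multiplicative map (for the
Koszul-signed multiplication `μ` on `B ⊗ B`) with `Δ(x) = x ⊗ x` and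
`Δ(e_x) = e_x ⊗ x + 1 ⊗ e_x`. -/
def IsBCoprod
    (μ : BAlg k R ⊗[k] BAlg k R →ₗ[k] BAlg k R ⊗[k] BAlg k R →ₗ[k] BAlg k R ⊗[k] BAlg k R)
    (Δ : BAlg k R →ₗ[k] BAlg k R ⊗[k] BAlg k R) : Prop :=
  Δ 1 = 1 ⊗ₜ 1 ∧
  (∀ a b : BAlg k R, Δ (a * b) = μ (Δ a) (Δ b)) ∧
  (∀ x : X, Δ (gg k R x) = gg k R x ⊗ₜ gg k R x) ∧
  (∀ x : X, Δ (ee k R x) = ee k R x ⊗ₜ gg k R x + 1 ⊗ₜ ee k R x)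

/-- `D` is the operator `d ⊗ 1 + 1 ⊗ d` on `B ⊗ B` with Koszul signs:
`D(a ⊗ b) = d(a) ⊗ b + (-1)^{|a|} a ⊗ d(b)` for `a` homogeneous. -/
def IsKoszulDTensor (d : BAlg k R →ₗ[k] BAlg k R)
    (D : BAlg k R ⊗[k] BAlg k R →ₗ[k] BAlg k R ⊗[k] BAlg k R) : Prop :=
  ∀ (m : ℕ) (a b : BAlg k R), a ∈ Bdeg k R m →
    D (a ⊗ₜ b) = d a ⊗ₜ b + ((-1 : k) ^ m) • (a ⊗ₜ[k] d b)

-- ============ auxiliary development ============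
namespace BAlgAux

variable {k R}

/-- monomials -/
def Sset : Set (BAlg k R) :=
  {z | ∃ l : List (X ⊕ X), z = (l.map (Sum.elim (gg k R) (ee k R))).prod}

lemma mono_mem (l : List (X ⊕ X)) :
    (l.map (Sum.elim (gg k R) (ee k R))).prod ∈ Bdeg k R (l.countP fun s => s.isRight) :=
  Submodule.subset_span ⟨l, rfl, rfl⟩

lemma one_mem0 : (1 : BAlg k R) ∈ Bdeg k R 0 := by
  simpa using mono_mem (k := k) (R := R) []

lemma gg_mem (x : X) : gg k R x ∈ Bdeg k R 0 := by
  simpa using mono_mem (k := k) (R := R) [Sum.inl x]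

lemma ee_mem (x : X) : ee k R x ∈ Bdeg k R 1 := by
  simpa using mono_mem (k := k) (R := R) [Sum.inr x]

lemma Bdeg_mul {i j : ℕ} {a b : BAlg k R} (ha : a ∈ Bdeg k R i) (hb : b ∈ Bdeg k R j) :
    a * b ∈ Bdeg k R (i + j) := by
  have h : Bdeg k R i * Bdeg k R j ≤ Bdeg k R (i + j) := by
    rw [Bdeg, Bdeg, Submodule.span_mul_span]
    refine Submodule.span_le.2 ?_
    rintro z hz
    rw [Set.mem_mul] at hz
    obtain ⟨s, ⟨l1, h1, rfl⟩, t, ⟨l2, h2, rfl⟩, rfl⟩ := hz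
    exact Submodule.subset_span
      ⟨l1 ++ l2, by simp [List.countP_append, h1, h2], by simp⟩
  exact h (Submodule.mul_mem_mul ha hb)

lemma span_mul {a b : BAlg k R} (ha : a ∈ Submodule.span k (Sset (k := k) (R := R)))
    (hb : b ∈ Submodule.span k (Sset (k := k) (R := R))) :
    a * b ∈ Submodule.span k (Sset (k := k) (R := R)) := by
  have h : Submodule.span k (Sset (k := k) (R := R)) * Submodule.span k Sset
      ≤ Submodule.span k (Sset (k := k) (R := R)) := by
    rw [Submodule.span_mul_span]
    refine Submodule.span_le.2 ?_
    rintro z hz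
    rw [Set.mem_mul] at hz
    obtain ⟨s, ⟨l1, rfl⟩, t, ⟨l2, rfl⟩, rfl⟩ := hz
    exact Submodule.subset_span ⟨l1 ++ l2, by simp⟩
  exact h (Submodule.mul_mem_mul ha hb)

lemma Sset_span_top : Submodule.span k (Sset (k := k) (R := R)) = ⊤ := by
  rw [eq_top_iff]
  rintro z -
  obtain ⟨w, rfl⟩ := RingQuot.mkAlgHom_surjective k (Brel k R) z
  induction w using FreeAlgebra.induction with
  | grade0 r =>
      rw [AlgHom.commutes]
      have : (algebraMap k (BAlg k R)) r = r • 1 := by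
        rw [Algebra.algebraMap_eq_smul_one]
      rw [this]
      exact Submodule.smul_mem _ _ (Submodule.subset_span ⟨[], by simp⟩)
  | grade1 x =>
      cases x with
      | inl x => exact Submodule.subset_span ⟨[Sum.inl x], by simp [gg]⟩
      | inr x => exact Submodule.subset_span ⟨[Sum.inr x], by simp [ee]⟩
  | mul a b ha hb => rw [map_mul]; exact span_mul ha hb
  | add a b ha hb => rw [map_add]; exact Submodule.add_mem _ ha hb

end BAlgAux

namespace BAlgAux
variable {k : Type*} [CommRing k] {X : Type*} {R : RackS X}
variable {d : BAlg k R →ₗ[k] BAlg k R}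

lemma d_one (hd : IsBDeriv k R d) : d (1 : BAlg k R) = 0 := by
  have h := hd.1 0 1 1 one_mem0
  simp only [mul_one, one_mul, pow_zero, one_smul] at h
  exact (left_eq_add.mp h)

lemma d_mono (hd : IsBDeriv k R d) (l : List (X ⊕ X)) :
    d ((l.map (Sum.elim (gg k R) (ee k R))).prod) ∈
        Bdeg k R ((l.countP fun s => s.isRight) - 1) ∧
      ((l.countP fun s => s.isRight) = 0 →
        d ((l.map (Sum.elim (gg k R) (ee k R))).prod) = 0) := by
  induction l with
  | nil =>
      constructor
      · simp only [List.map_nil, List.prod_nil, d_one hd]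
        exact Submodule.zero_mem _
      · intro _; simp only [List.map_nil, List.prod_nil, d_one hd]
  | cons s l ih =>
      cases s with
      | inl x =>
          have hc : ((Sum.inl x :: l).countP fun s => s.isRight) =
              (l.countP fun s => s.isRight) := by simp
          have hp : ((Sum.inl x :: l).map (Sum.elim (gg k R) (ee k R))).prod =
              gg k R x * (l.map (Sum.elim (gg k R) (ee k R))).prod := by simp
          rw [hc, hp, hd.1 0 _ _ (gg_mem x), hd.2.1, zero_mul, zero_add, pow_zero, one_smul]
          constructor
          · have := Bdeg_mul (gg_mem (k := k) (R := R) x) ih.1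
            simpa using this
          · intro h0
            rw [ih.2 h0, mul_zero]
      | inr x =>
          have hc : ((Sum.inr x :: l).countP fun s => s.isRight) =
              (l.countP fun s => s.isRight) + 1 := by rw [List.countP_cons] <;> rfl
          have hp : ((Sum.inr x :: l).map (Sum.elim (gg k R) (ee k R))).prod =
              ee k R x * (l.map (Sum.elim (gg k R) (ee k R))).prod := by simp
          rw [hc, hp, hd.1 1 _ _ (ee_mem x), hd.2.2]
          refine ⟨?_, by omega⟩
          simp only [Nat.add_sub_cancel]
          refine Submodule.add_mem _ ?_ (Submodule.smul_mem _ _ ?_)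
          · have h1 : (1 - gg k R x) ∈ Bdeg k R 0 :=
              Submodule.sub_mem _ one_mem0 (gg_mem x)
            simpa using Bdeg_mul h1 (mono_mem l)
          · rcases Nat.eq_zero_or_pos (l.countP fun s => s.isRight) with h0 | h0
            · rw [ih.2 h0, mul_zero]; exact Submodule.zero_mem _
            · have := Bdeg_mul (ee_mem (k := k) (R := R) x) ih.1
              have he : 1 + ((l.countP fun s => s.isRight) - 1) =
                  (l.countP fun s => s.isRight) := by omega
              rwa [he] at this

lemma d_mem (hd : IsBDeriv k R d) {n : ℕ} {a : BAlg k R} (ha : a ∈ Bdeg k R n) :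
    d a ∈ Bdeg k R (n - 1) ∧ (n = 0 → d a = 0) := by
  induction ha using Submodule.span_induction with
  | mem z hz =>
      obtain ⟨l, hc, rfl⟩ := hz
      rw [← hc]
      exact d_mono hd l
  | zero => simp
  | add x y hx hy ihx ihy =>
      rw [map_add]
      exact ⟨Submodule.add_mem _ ihx.1 ihy.1,
        fun h0 => by rw [ihx.2 h0, ihy.2 h0, add_zero]⟩
  | smul c x hx ihx =>
      rw [map_smul]
      exact ⟨Submodule.smul_mem _ _ ihx.1, fun h0 => by rw [ihx.2 h0, smul_zero]⟩

/-- left-monomial simple tensors span `B ⊗ B` -/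
lemma SL_span_top :
    Submodule.span k {z : BAlg k R ⊗[k] BAlg k R |
      ∃ a ∈ Sset (k := k) (R := R), ∃ b, z = a ⊗ₜ[k] b} = ⊤ := by
  rw [eq_top_iff, ← TensorProduct.span_tmul_eq_top k (BAlg k R) (BAlg k R)]
  refine Submodule.span_le.2 ?_
  rintro z ⟨m, n, rfl⟩
  have hm : m ∈ Submodule.span k (Sset (k := k) (R := R)) := by
    rw [Sset_span_top]; trivial
  induction hm using Submodule.span_induction with
  | mem a ha => exact Submodule.subset_span ⟨a, ha, n, rfl⟩
  | zero => rw [TensorProduct.zero_tmul]; exact Submodule.zero_mem _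
  | add x y hx hy ihx ihy =>
      rw [TensorProduct.add_tmul]; exact Submodule.add_mem _ ihx ihy
  | smul c x hx ihx =>
      rw [← TensorProduct.smul_tmul']; exact Submodule.smul_mem _ _ ihx

lemma negpow_two (c : ℕ) {i j : ℕ} (h : i = j + 2 * c) : ((-1 : k)) ^ i = (-1) ^ j := by
  rw [h, pow_add, pow_mul, neg_one_sq, one_pow, mul_one]

end BAlgAux

namespace BAlgAux
variable {k : Type*} [CommRing k] {X : Type*} {R : RackS X}
variable {μ : BAlg k R ⊗[k] BAlg k R →ₗ[k] BAlg k R ⊗[k] BAlg k R →ₗ[k] BAlg k R ⊗[k] BAlg k R}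
variable {d : BAlg k R →ₗ[k] BAlg k R}
variable {D : BAlg k R ⊗[k] BAlg k R →ₗ[k] BAlg k R ⊗[k] BAlg k R}

lemma keyM (hμ : IsKoszulMul k R μ) (hd : IsBDeriv k R d) (hD : IsKoszulDTensor k R d D)
    {p q : ℕ} {a b : BAlg k R} (ha : a ∈ Bdeg k R p) (hb : b ∈ Bdeg k R q)
    (v : BAlg k R ⊗[k] BAlg k R) :
    D (μ (a ⊗ₜ b) v) =
      μ (D (a ⊗ₜ b)) v + ((-1 : k) ^ (p + q)) • μ (a ⊗ₜ b) (D v) := by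
  have heq : D.comp (μ (a ⊗ₜ[k] b)) =
      μ (D (a ⊗ₜ[k] b)) + ((-1 : k) ^ (p + q)) • ((μ (a ⊗ₜ[k] b)).comp D) := by
    apply LinearMap.ext_on SL_span_top
    rintro z ⟨a', ⟨l', rfl⟩, b', rfl⟩
    have ha' := mono_mem (k := k) (R := R) l'
    set r := l'.countP (fun s => s.isRight) with hr
    set a' := (l'.map (Sum.elim (gg k R) (ee k R))).prod with ha'def
    have hda' := d_mem hd ha'
    have hdb := d_mem hd hb
    simp only [LinearMap.comp_apply, LinearMap.add_apply, LinearMap.smul_apply]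
    rw [hμ q r a b a' b' hb ha', map_smul,
      hD (p + r) _ _ (Bdeg_mul ha ha'),
      hd.1 p a a' ha, hd.1 q b b' hb,
      hD p a b ha, hD r a' b' ha',
      map_add, LinearMap.add_apply, map_smul, LinearMap.smul_apply,
      map_add (μ (a ⊗ₜ[k] b)), map_smul (μ (a ⊗ₜ[k] b)),
      hμ q r _ b a' b' hb ha',
      hμ (q - 1) r a _ a' b' hdb.1 ha',
      hμ q (r - 1) a b _ b' hb hda'.1,
      hμ q r a b a' _ hb ha']
    simp only [TensorProduct.add_tmul, TensorProduct.smul_tmul', TensorProduct.tmul_add,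
      TensorProduct.tmul_smul, smul_add, smul_smul]
    rcases q with _ | q'
    · rw [hdb.2 rfl]
      simp only [zero_mul, TensorProduct.tmul_zero, smul_zero, add_zero, zero_add,
        Nat.zero_mul, zero_mul, pow_zero, one_mul, mul_one, Nat.add_zero, add_zero,
        Nat.zero_sub, pow_add]
      abel
    · rcases r with _ | r'
      · rw [hda'.2 rfl]
        simp only [mul_zero, TensorProduct.zero_tmul, smul_zero, add_zero, zero_add,
          Nat.mul_zero, mul_zero, pow_zero, one_mul, mul_one, Nat.add_zero, add_zero,
          smul_zero, pow_add]
        abel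
      · simp only [Nat.add_sub_cancel]
        have h2 : ((-1 : k) ^ ((q' + 1) * (r' + 1)) * (-1) ^ p)
            = ((-1 : k) ^ (p + (q' + 1)) * (-1) ^ ((q' + 1) * r')) := by
          rw [← pow_add, ← pow_add]; congr 1; ring
        have h3 : ((-1 : k) ^ ((q' + 1) * (r' + 1)) * (-1) ^ (p + (r' + 1)))
            = ((-1 : k) ^ p * (-1) ^ (q' * (r' + 1))) := by
          rw [← pow_add, ← pow_add]
          exact negpow_two (r' + 1) (by ring)
        have h4 : ((-1 : k) ^ ((q' + 1) * (r' + 1)) * ((-1) ^ (p + (r' + 1)) * (-1) ^ (q' + 1)))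
            = ((-1 : k) ^ (p + (q' + 1)) * ((-1) ^ (r' + 1) * (-1) ^ ((q' + 1) * (r' + 1)))) := by
          rw [← pow_add, ← pow_add, ← pow_add, ← pow_add]; congr 1; ring
        rw [h2, h3, h4]
        abel
  have := LinearMap.congr_fun heq v
  simpa using this

end BAlgAux


/-- The differential `d` of `B` is a coderivation with respect to `Δ`:
`Δ ∘ d = (d ⊗ 1 + 1 ⊗ d) ∘ Δ` (with Koszul signs). -/
theorem BAlg_d_coderivation (k : Type*) [CommRing k] {X : Type*} (R : RackS X)
    (μ : BAlg k R ⊗[k] BAlg k R →ₗ[k] BAlg k R ⊗[k] BAlg k R →ₗ[k] BAlg k R ⊗[k] BAlg k R)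
    (hμ : IsKoszulMul k R μ)
    (d : BAlg k R →ₗ[k] BAlg k R) (hd : IsBDeriv k R d)
    (Δ : BAlg k R →ₗ[k] BAlg k R ⊗[k] BAlg k R) (hΔ : IsBCoprod k R μ Δ)
    (D : BAlg k R ⊗[k] BAlg k R →ₗ[k] BAlg k R ⊗[k] BAlg k R)
    (hD : IsKoszulDTensor k R d D) :
    Δ.comp d = D.comp Δ := by

  apply LinearMap.ext_on BAlgAux.Sset_span_top
  rintro z ⟨l, rfl⟩
  simp only [LinearMap.comp_apply]
  induction l with
  | nil =>
      simp only [List.map_nil, List.prod_nil]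
      rw [BAlgAux.d_one hd, map_zero, hΔ.1, hD 0 1 1 BAlgAux.one_mem0, BAlgAux.d_one hd]
      simp
  | cons s l ih =>
      cases s with
      | inl x =>
          have hp : ((Sum.inl x :: l).map (Sum.elim (gg k R) (ee k R))).prod =
              gg k R x * (l.map (Sum.elim (gg k R) (ee k R))).prod := by simp
          rw [hp, hd.1 0 _ _ (BAlgAux.gg_mem x), hd.2.1, zero_mul, zero_add, pow_zero,
            one_smul, hΔ.2.1, hΔ.2.1, hΔ.2.2.1, ih,
            BAlgAux.keyM hμ hd hD (BAlgAux.gg_mem x) (BAlgAux.gg_mem x),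
            hD 0 _ _ (BAlgAux.gg_mem x), hd.2.1]
          simp
      | inr x =>
          have hp : ((Sum.inr x :: l).map (Sum.elim (gg k R) (ee k R))).prod =
              ee k R x * (l.map (Sum.elim (gg k R) (ee k R))).prod := by simp
          rw [hp, hd.1 1 _ _ (BAlgAux.ee_mem x), hd.2.2, map_add, map_smul,
            hΔ.2.1, hΔ.2.1, hΔ.2.1, map_sub, hΔ.1, hΔ.2.2.1, hΔ.2.2.2, ih, map_add]
          simp only [LinearMap.add_apply, map_add]
          rw [BAlgAux.keyM hμ hd hD (BAlgAux.ee_mem x) (BAlgAux.gg_mem x),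
            BAlgAux.keyM hμ hd hD BAlgAux.one_mem0 (BAlgAux.ee_mem x),
            hD 1 _ _ (BAlgAux.ee_mem x), hD 0 _ _ BAlgAux.one_mem0,
            hd.2.2, hd.2.1, BAlgAux.d_one hd]
          simp only [TensorProduct.tmul_zero, TensorProduct.zero_tmul, smul_zero, add_zero,
            zero_add, pow_one, pow_zero, one_smul, neg_smul,
            TensorProduct.sub_tmul, TensorProduct.tmul_sub, map_sub, LinearMap.sub_apply,
            map_add, LinearMap.add_apply]
          simp only [sub_eq_add_neg, ← neg_one_smul k (_ ⊗ₜ[k] _), map_add, map_smul,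
            LinearMap.add_apply, LinearMap.smul_apply]
          simp only [smul_add, neg_smul, one_smul, smul_eq_mul, mul_one]
          module
end

section
/- Let $X$ be a rack and $B$ its dg bialgebra. For all $x_1,\ldots,x_n \in X$: $\Delta(e_{x_1}\cdots e_{x_n}) = \sum_{A \subseteq \{1,\ldots,n\}} \epsilon(A)\, \delta_A^0(e_{x_1}\cdots e_{x_n}) \otimes \delta_{A^c}^1(e_{x_1}\cdots e_{x_n})$, where $\epsilon(A)$ is the signature of the unshuffle permutation putting $A$ on the left and $A^c$ on the right, and $\delta_A^\varepsilon$ is the composition of the face maps $\delta_a^\varepsilon$ for $a \in A$ in increasing order. -/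
open scoped TensorProduct

variable (k : Type*) [CommRing k] {X : Type*} (R : RackS X)

/-- The monomial `e_{x_1} ⋯ e_{x_n}` of `B` associated to a list of rack elements. -/
noncomputable def Emon (k : Type*) [CommRing k] {X : Type*} (R : RackS X) (l : List X) :
    BAlg k R :=
  (l.map (ee k R)).prod

/-- The face map `δ_i^ε` acting on a pair `(a, (x_1,…,x_n))` representing the element
`a·e_{x_1}⋯e_{x_n}` of `B` (0-based index `i`): `δ_i^0` deletes the `i`-th entry, and
`δ_i^1` deletes it, multiplies the coefficient by `x_i` and acts by `x_i` on all
previous entries. -/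
noncomputable def facePair (k : Type*) [CommRing k] {X : Type*} (R : RackS X)
    (ε : Bool) (i : ℕ) (p : BAlg k R × List X) : BAlg k R × List X :=
  if h : i < p.2.length then
    (if ε then p.1 * gg k R (p.2.get ⟨i, h⟩) else p.1,
      (if ε then (p.2.take i).map (fun z => R.act z (p.2.get ⟨i, h⟩)) else p.2.take i)
        ++ p.2.drop (i + 1))
  else p

/-- `δ_A^ε`: the composition of the face maps `δ_a^ε`, `a ∈ A`, displayed in increasing
order (so the largest index acts first), on a sorted list of indices. -/
noncomputable def applyFaces (k : Type*) [CommRing k] {X : Type*} (R : RackS X)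
    (ε : Bool) : List ℕ → BAlg k R × List X → BAlg k R × List X
  | [], p => p
  | i :: rest, p => facePair k R ε i (applyFaces k R ε rest p)

/-- The element of `B` represented by a coefficient-list pair. -/
noncomputable def pairVal (k : Type*) [CommRing k] {X : Type*} (R : RackS X)
    (p : BAlg k R × List X) : BAlg k R :=
  p.1 * Emon k R p.2

/-- The sign `ε(A)`: the signature of the unshuffle permutation putting `A` on the left
and `Aᶜ` on the right, times the extra sign `(-1)^{|A||Aᶜ|}`; the signature of the
unshuffle is `(-1)^{#{(a,b) ∈ A × Aᶜ | b < a}}`. -/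
def unshuffleSign (k : Type*) [CommRing k] {n : ℕ} (S : Finset (Fin n)) : k :=
  (-1 : k) ^ (((S ×ˢ Sᶜ).filter fun p => p.2 < p.1).card + S.card * Sᶜ.card)

section Aux

open Finset

variable {K : Type*} [CommRing K] {Y : Type*} {Q : RackS Y}

/-! ### Relations in `B` -/

lemma gg_swap (x y : Y) :
    gg K Q y * gg K Q (Q.act x y) = gg K Q x * gg K Q y := by
  simp only [gg, ← map_mul]
  exact RingQuot.mkAlgHom_rel K (Brel.comm x y)

lemma ee_swap (x y : Y) :
    gg K Q y * ee K Q (Q.act x y) = ee K Q x * gg K Q y := by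
  simp only [gg, ee, ← map_mul]
  exact RingQuot.mkAlgHom_rel K (Brel.eact x y)

lemma Emon_nil : Emon K Q ([] : List Y) = 1 := by simp [Emon]

lemma Emon_cons (x : Y) (t : List Y) :
    Emon K Q (x :: t) = ee K Q x * Emon K Q t := by simp [Emon]

/-! ### Degrees -/

lemma Emon_mem_Bdeg (m : List Y) : Emon K Q m ∈ Bdeg K Q m.length := by
  apply Submodule.subset_span
  refine ⟨m.map Sum.inr, ?_, ?_⟩
  · simp [List.countP_map, Function.comp_def]
  · simp [Emon, List.map_map, Function.comp_def]

lemma gg_mem_Bdeg (x : Y) : gg K Q x ∈ Bdeg K Q 0 :=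
  Submodule.subset_span ⟨[Sum.inl x], by simp, by simp⟩

lemma ee_mem_Bdeg (x : Y) : ee K Q x ∈ Bdeg K Q 1 :=
  Submodule.subset_span ⟨[Sum.inr x], by simp, by simp⟩

/-! ### Face map mechanics -/

lemma facePair_true_pos {p : BAlg K Q × List Y} {i : ℕ} (h : i < p.2.length) :
    facePair K Q true i p
      = (p.1 * gg K Q (p.2.get ⟨i, h⟩),
          (p.2.take i).map (fun z => Q.act z (p.2.get ⟨i, h⟩)) ++ p.2.drop (i + 1)) := by
  unfold facePair
  rw [dif_pos h]
  simp

lemma facePair_false_pos {p : BAlg K Q × List Y} {i : ℕ} (h : i < p.2.length) :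
    facePair K Q false i p = (p.1, p.2.take i ++ p.2.drop (i + 1)) := by
  unfold facePair
  rw [dif_pos h]
  simp

lemma facePair_neg (ε : Bool) {p : BAlg K Q × List Y} {i : ℕ} (h : ¬ i < p.2.length) :
    facePair K Q ε i p = p := dif_neg h

lemma applyFaces_false_fst (A : List ℕ) (p : BAlg K Q × List Y) :
    (applyFaces K Q false A p).1 = p.1 := by
  induction A with
  | nil => rfl
  | cons i rest ih =>
    show (facePair K Q false i (applyFaces K Q false rest p)).1 = p.1
    by_cases h : i < (applyFaces K Q false rest p).2.length
    · rw [facePair_false_pos h]; exact ih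
    · rw [facePair_neg _ h]; exact ih

lemma applyFaces_false_shift (A : List ℕ) (c : BAlg K Q) (x : Y) (t : List Y) :
    applyFaces K Q false (A.map (· + 1)) (c, x :: t)
      = (c, x :: (applyFaces K Q false A (c, t)).2) := by
  induction A with
  | nil => rfl
  | cons i rest ih =>
    show facePair K Q false (i + 1) (applyFaces K Q false (rest.map (· + 1)) (c, x :: t))
        = (c, x :: (facePair K Q false i (applyFaces K Q false rest (c, t))).2)
    rw [ih]
    set q := applyFaces K Q false rest (c, t) with hq
    have hfst : q.1 = c := applyFaces_false_fst rest (c, t)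
    by_cases h : i < q.2.length
    · rw [facePair_false_pos (p := (c, x :: q.2)) (i := i + 1)
        (by simpa using Nat.succ_lt_succ h), facePair_false_pos h]
      simp
    · rw [facePair_neg _ (p := (c, x :: q.2)) (i := i + 1) (by simpa using h),
        facePair_neg _ h]

lemma applyFaces_true_shift (A : List ℕ) (x : Y) (t : List Y) :
    ∃ x' : Y,
      applyFaces K Q true (A.map (· + 1)) (1, x :: t)
        = ((applyFaces K Q true A (1, t)).1, x' :: (applyFaces K Q true A (1, t)).2)
      ∧ (applyFaces K Q true A (1, t)).1 * ee K Q x'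
          = ee K Q x * (applyFaces K Q true A (1, t)).1
      ∧ (applyFaces K Q true A (1, t)).1 * gg K Q x'
          = gg K Q x * (applyFaces K Q true A (1, t)).1 := by
  induction A with
  | nil => exact ⟨x, rfl, by simp [applyFaces], by simp [applyFaces]⟩
  | cons i rest ih =>
    obtain ⟨x', hEq, he, hg⟩ := ih
    set q := applyFaces K Q true rest (1, t) with hq
    by_cases h : i < q.2.length
    · set v := q.2.get ⟨i, h⟩ with hv
      have hstep : applyFaces K Q true ((i :: rest).map (· + 1)) (1, x :: t)
          = ((facePair K Q true i q).1, Q.act x' v :: (facePair K Q true i q).2) := by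
        show facePair K Q true (i + 1) (applyFaces K Q true (rest.map (· + 1)) (1, x :: t)) = _
        rw [hEq, facePair_true_pos (p := (q.1, x' :: q.2)) (i := i + 1)
          (by simpa using Nat.succ_lt_succ h), facePair_true_pos h]
        simp [hv]
      have hfst : (facePair K Q true i q).1 = q.1 * gg K Q v := by
        rw [facePair_true_pos h]
      refine ⟨Q.act x' v, ?_, ?_, ?_⟩
      · show facePair K Q true (i + 1) _ = _
        rw [show applyFaces K Q true ((i :: rest).map (· + 1)) (1, x :: t)
            = facePair K Q true (i + 1) (applyFaces K Q true (rest.map (· + 1)) (1, x :: t))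
            from rfl] at hstep
        rw [hstep]
        rfl
      · show (applyFaces K Q true (i :: rest) (1, t)).1 * _ = _
        show (facePair K Q true i q).1 * _ = _ * (facePair K Q true i q).1
        rw [hfst, mul_assoc, ee_swap x' v, ← mul_assoc, he, mul_assoc]
      · show (facePair K Q true i q).1 * _ = _ * (facePair K Q true i q).1
        rw [hfst, mul_assoc, gg_swap x' v, ← mul_assoc, hg, mul_assoc]
    · refine ⟨x', ?_, ?_, ?_⟩
      · show facePair K Q true (i + 1) (applyFaces K Q true (rest.map (· + 1)) (1, x :: t)) = _
        rw [hEq, facePair_neg _ (p := (q.1, x' :: q.2)) (i := i + 1) (by simpa using h)]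
        show _ = ((facePair K Q true i q).1, x' :: (facePair K Q true i q).2)
        rw [facePair_neg _ h]
      · show (facePair K Q true i q).1 * _ = _ * (facePair K Q true i q).1
        rw [facePair_neg _ h]; exact he
      · show (facePair K Q true i q).1 * _ = _ * (facePair K Q true i q).1
        rw [facePair_neg _ h]; exact hg

lemma applyFaces_snd_length (ε : Bool) (A : List ℕ) (l : List Y)
    (hA : A.Pairwise (· < ·)) (hb : ∀ a ∈ A, a < l.length) :
    (applyFaces K Q ε A (1, l)).2.length = l.length - A.length := by
  induction A with
  | nil => rfl
  | cons i rest ih =>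
    have h1 : rest.Pairwise (· < ·) := hA.of_cons
    have h2 : ∀ a ∈ rest, a < l.length := fun a ha => hb a (List.mem_cons_of_mem _ ha)
    have hlen := ih h1 h2
    have hcard : rest.length ≤ l.length - i - 1 := by
      have hnd : rest.Nodup := h1.imp fun h => ne_of_lt h
      have hsub : rest.toFinset ⊆ Finset.Ioo i l.length := by
        intro a ha
        rw [List.mem_toFinset] at ha
        exact Finset.mem_Ioo.2 ⟨List.rel_of_pairwise_cons hA ha, h2 a ha⟩
      have hle := Finset.card_le_card hsub
      rwa [List.toFinset_card_of_nodup hnd, Nat.card_Ioo] at hle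
    have hil : i < l.length := hb i (List.mem_cons_self)
    have hi : i < (applyFaces K Q ε rest (1, l)).2.length := by omega
    show (facePair K Q ε i (applyFaces K Q ε rest (1, l))).2.length = _
    cases ε
    · rw [facePair_false_pos hi]
      simp only [List.length_append, List.length_take, List.length_drop, List.length_cons]
      omega
    · rw [facePair_true_pos hi]
      simp only [List.length_append, List.length_take, List.length_drop, List.length_map,
        List.length_cons]
      omega

end Aux
section Aux2

open Finset

variable {K : Type*} [CommRing K]

lemma zero_not_mem_map_succ {n : ℕ} (T : Finset (Fin n)) :
    (0 : Fin (n + 1)) ∉ T.map (Fin.succEmb n) := by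
  simp only [Finset.mem_map, Fin.coe_succEmb, not_exists]
  intro a
  rintro ⟨ha, h⟩
  exact Fin.succ_ne_zero a h

lemma sort_map_val_succ {n : ℕ} (T : Finset (Fin n)) :
    ((T.map (Fin.succEmb n)).sort (· ≤ ·)).map Fin.val
      = (((T.sort (· ≤ ·)).map Fin.val).map (· + 1)) := by
  have h : (T.map (Fin.succEmb n)).sort (· ≤ ·) = (T.sort (· ≤ ·)).map Fin.succ := by
    refine List.Perm.eq_of_pairwise' (Finset.pairwise_sort _ _) ?_ ?_
    · exact List.Pairwise.map _ (fun a b hab => Fin.succ_le_succ_iff.2 hab)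
        (Finset.pairwise_sort T (· ≤ ·))
    · rw [← Multiset.coe_eq_coe]
      change ((T.map (Fin.succEmb n)).sort (· ≤ ·) : Multiset (Fin (n + 1)))
        = ((T.sort (· ≤ ·)).map Fin.succ : List (Fin (n + 1)))
      rw [Finset.sort_eq, ← Multiset.map_coe, Finset.sort_eq, Finset.map_val]
      rfl
  rw [h, List.map_map, List.map_map]
  rfl

lemma compl_map_succ {n : ℕ} (T : Finset (Fin n)) :
    (T.map (Fin.succEmb n))ᶜ = insert 0 (Tᶜ.map (Fin.succEmb n)) := by
  ext a
  induction a using Fin.cases with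
  | zero =>
    simp only [Finset.mem_compl, Finset.mem_insert, true_or, iff_true]
    exact zero_not_mem_map_succ T
  | succ i =>
    simp only [Finset.mem_compl, Finset.mem_map, Fin.coe_succEmb, Finset.mem_insert]
    constructor
    · intro h
      right
      exact ⟨i, fun hi => h ⟨i, hi, rfl⟩, rfl⟩
    · rintro (h | ⟨j, hj, hje⟩)
      · exact absurd h (Fin.succ_ne_zero i)
      · have hji : j = i := Fin.succ_injective n hje
        subst hji
        rintro ⟨j', hj', hje'⟩
        have : j' = j := Fin.succ_injective n hje'
        subst this
        exact hj hj'

lemma compl_insert_zero {n : ℕ} (T : Finset (Fin n)) :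
    (insert 0 (T.map (Fin.succEmb n)))ᶜ = Tᶜ.map (Fin.succEmb n) := by
  rw [Finset.compl_insert, compl_map_succ, Finset.erase_insert (zero_not_mem_map_succ Tᶜ)]

lemma invc_eq_sum {m : ℕ} (S V : Finset (Fin m)) :
    ((S ×ˢ V).filter fun p => p.2 < p.1).card = ∑ a ∈ S, (V.filter (· < a)).card := by
  rw [Finset.card_filter, Finset.sum_product]
  exact Finset.sum_congr rfl fun a _ => (Finset.card_filter _ _).symm

lemma filter_map_succ_lt {n : ℕ} (U : Finset (Fin n)) (a : Fin n) :
    ((U.map (Fin.succEmb n)).filter (· < (Fin.succEmb n) a)).card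
      = (U.filter (· < a)).card := by
  rw [Finset.filter_map, Finset.card_map]
  apply congrArg Finset.card
  apply Finset.filter_congr
  intro b _
  simp only [Function.comp_apply, Fin.coe_succEmb]
  exact Fin.succ_lt_succ_iff

lemma invc_map {n : ℕ} (T : Finset (Fin n)) :
    (((T.map (Fin.succEmb n)) ×ˢ (T.map (Fin.succEmb n))ᶜ).filter fun p => p.2 < p.1).card
      = ((T ×ˢ Tᶜ).filter fun p => p.2 < p.1).card + T.card := by
  rw [compl_map_succ, invc_eq_sum, invc_eq_sum, Finset.sum_map]
  have hpt : ∀ a ∈ T,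
      (((insert (0 : Fin (n + 1)) (Tᶜ.map (Fin.succEmb n))).filter
        (· < (Fin.succEmb n) a))).card = (Tᶜ.filter (· < a)).card + 1 := by
    intro a _
    rw [Finset.filter_insert,
      if_pos (show (0 : Fin (n + 1)) < (Fin.succEmb n) a from Fin.succ_pos a)]
    rw [Finset.card_insert_of_notMem fun hmem =>
      zero_not_mem_map_succ Tᶜ (Finset.mem_of_mem_filter _ hmem)]
    rw [filter_map_succ_lt]
  rw [Finset.sum_congr rfl hpt, Finset.sum_add_distrib, Finset.sum_const, smul_eq_mul, mul_one]

lemma invc_insert {n : ℕ} (T : Finset (Fin n)) :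
    (((insert 0 (T.map (Fin.succEmb n))) ×ˢ (insert 0 (T.map (Fin.succEmb n)))ᶜ).filter
        fun p => p.2 < p.1).card
      = ((T ×ˢ Tᶜ).filter fun p => p.2 < p.1).card := by
  rw [compl_insert_zero, invc_eq_sum, invc_eq_sum,
    Finset.sum_insert (zero_not_mem_map_succ T), Finset.sum_map]
  have h0 : ((Tᶜ.map (Fin.succEmb n)).filter (· < (0 : Fin (n + 1)))) = ∅ := by
    apply Finset.filter_eq_empty_iff.2
    intro b _
    exact (Fin.zero_le b).not_gt
  rw [h0]
  simp only [Finset.card_empty, zero_add]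
  exact Finset.sum_congr rfl fun a _ => filter_map_succ_lt Tᶜ a

lemma unshuffleSign_map {n : ℕ} (T : Finset (Fin n)) :
    unshuffleSign K (T.map (Fin.succEmb n)) = unshuffleSign K T := by
  unfold unshuffleSign
  rw [invc_map, Finset.card_map, compl_map_succ,
    Finset.card_insert_of_notMem (zero_not_mem_map_succ Tᶜ), Finset.card_map]
  have h : ((T ×ˢ Tᶜ).filter fun p => p.2 < p.1).card + T.card + T.card * (Tᶜ.card + 1)
      = (((T ×ˢ Tᶜ).filter fun p => p.2 < p.1).card + T.card * Tᶜ.card) + 2 * T.card := by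
    ring
  rw [h, pow_add, pow_mul, neg_one_sq, one_pow, mul_one]

lemma unshuffleSign_insert {n : ℕ} (T : Finset (Fin n)) :
    unshuffleSign K (insert 0 (T.map (Fin.succEmb n)))
      = (-1 : K) ^ (Tᶜ.card) * unshuffleSign K T := by
  unfold unshuffleSign
  rw [invc_insert, Finset.card_insert_of_notMem (zero_not_mem_map_succ T), Finset.card_map,
    compl_insert_zero, Finset.card_map]
  have h : ((T ×ˢ Tᶜ).filter fun p => p.2 < p.1).card + (T.card + 1) * Tᶜ.card
      = Tᶜ.card + (((T ×ˢ Tᶜ).filter fun p => p.2 < p.1).card + T.card * Tᶜ.card) := by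
    ring
  rw [h, pow_add]

/-- Splitting a subset of `Fin (n+1)` into whether it contains `0` and its rest. -/
noncomputable def splitE (n : ℕ) : Finset (Fin n) × Bool ≃ Finset (Fin (n + 1)) where
  toFun p := if p.2 then insert 0 (p.1.map (Fin.succEmb n)) else p.1.map (Fin.succEmb n)
  invFun S := (S.preimage Fin.succ (Fin.succ_injective n).injOn, decide ((0 : Fin (n + 1)) ∈ S))
  left_inv := by
    rintro ⟨T, b⟩
    cases b
    · refine Prod.ext ?_ ?_
      · ext a
        simp [Finset.mem_preimage, Fin.succ_inj]
      · simp only [decide_eq_false_iff_not]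
        exact zero_not_mem_map_succ T
    · refine Prod.ext ?_ ?_
      · ext a
        simp [Finset.mem_preimage, Fin.succ_ne_zero, Fin.succ_inj]
      · exact decide_eq_true (Finset.mem_insert_self 0 _)
  right_inv := by
    intro S
    by_cases h0 : (0 : Fin (n + 1)) ∈ S
    · simp only [decide_eq_true h0, if_true]
      ext a
      induction a using Fin.cases with
      | zero => simpa using h0
      | succ i => simp [Finset.mem_preimage, Fin.succ_ne_zero]
    · simp only [decide_eq_false h0, Bool.false_eq_true, if_false]
      ext a
      induction a using Fin.cases with
      | zero =>
        constructor
        · intro h; exact absurd h (zero_not_mem_map_succ _)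
        · intro h; exact absurd h h0
      | succ i => simp [Finset.mem_preimage]

lemma splitE_true {n : ℕ} (T : Finset (Fin n)) :
    splitE n (T, true) = insert 0 (T.map (Fin.succEmb n)) := rfl

lemma splitE_false {n : ℕ} (T : Finset (Fin n)) :
    splitE n (T, false) = T.map (Fin.succEmb n) := rfl

end Aux2
section Aux3

open Finset

variable {K : Type*} [CommRing K] {Y : Type*} {Q : RackS Y}

lemma pairVal_eq (p : BAlg K Q × List Y) : pairVal K Q p = p.1 * Emon K Q p.2 := rfl

lemma applyFaces_false_fst' (A : List ℕ) (c : BAlg K Q) (l : List Y) :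
    (applyFaces K Q false A (c, l)).1 = c := applyFaces_false_fst A (c, l)

lemma facePair_false_zero (c : BAlg K Q) (x : Y) (l : List Y) :
    facePair K Q false 0 (c, x :: l) = (c, l) := by
  rw [facePair_false_pos (show 0 < (x :: l).length from Nat.succ_pos _)]
  rfl

lemma facePair_true_zero (c : BAlg K Q) (x : Y) (l : List Y) :
    facePair K Q true 0 (c, x :: l) = (c * gg K Q x, l) := by
  rw [facePair_true_pos (show 0 < (x :: l).length from Nat.succ_pos _)]
  rfl

lemma sortA_pairwise {m : ℕ} (S' : Finset (Fin m)) :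
    ((S'.sort (· ≤ ·)).map Fin.val).Pairwise (· < ·) :=
  List.Pairwise.map _ (fun _ _ h => h) (Finset.sortedLT_sort S').pairwise

lemma sortA_bound {m : ℕ} (S' : Finset (Fin m)) :
    ∀ a ∈ (S'.sort (· ≤ ·)).map Fin.val, a < m := by
  intro a ha
  obtain ⟨b, _, rfl⟩ := List.mem_map.1 ha
  exact b.isLt

lemma P0_shape (t : List Y) (S' : Finset (Fin t.length)) :
    pairVal K Q (applyFaces K Q false ((S'.sort (· ≤ ·)).map Fin.val) (1, t))
      = Emon K Q (applyFaces K Q false ((S'.sort (· ≤ ·)).map Fin.val) (1, t)).2 := by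
  simp only [pairVal_eq]
  rw [applyFaces_false_fst', one_mul]

lemma P0_len (t : List Y) (S' : Finset (Fin t.length)) :
    (applyFaces K Q false ((S'.sort (· ≤ ·)).map Fin.val) (1, t)).2.length = S'ᶜ.card := by
  rw [applyFaces_snd_length false _ _ (sortA_pairwise S') (sortA_bound S'),
    List.length_map, Finset.length_sort, Finset.card_compl, Fintype.card_fin]

lemma P0_mem (t : List Y) (S' : Finset (Fin t.length)) :
    pairVal K Q (applyFaces K Q false ((S'.sort (· ≤ ·)).map Fin.val) (1, t))
      ∈ Bdeg K Q (S'ᶜ.card) := by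
  rw [P0_shape, ← P0_len (K := K) (Q := Q) t S']
  exact Emon_mem_Bdeg _

lemma F1 (x : Y) (t : List Y) (S' : Finset (Fin t.length)) :
    pairVal K Q (applyFaces K Q false
        (((S'.map (Fin.succEmb t.length)).sort (· ≤ ·)).map Fin.val) (1, x :: t))
      = ee K Q x * pairVal K Q
          (applyFaces K Q false ((S'.sort (· ≤ ·)).map Fin.val) (1, t)) := by
  rw [sort_map_val_succ, applyFaces_false_shift]
  simp only [pairVal_eq]
  rw [one_mul, Emon_cons, applyFaces_false_fst', one_mul]

lemma F3 (x : Y) (t : List Y) (S' : Finset (Fin t.length)) :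
    pairVal K Q (applyFaces K Q false
        (((insert 0 (S'.map (Fin.succEmb t.length))).sort (· ≤ ·)).map Fin.val) (1, x :: t))
      = pairVal K Q (applyFaces K Q false ((S'.sort (· ≤ ·)).map Fin.val) (1, t)) := by
  rw [Finset.sort_insert (· ≤ ·) (fun b _ => Fin.zero_le b) (zero_not_mem_map_succ S'),
    List.map_cons, sort_map_val_succ]
  show pairVal K Q (facePair K Q false 0
    (applyFaces K Q false (((S'.sort (· ≤ ·)).map Fin.val).map (· + 1)) (1, x :: t))) = _
  rw [applyFaces_false_shift, facePair_false_zero]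
  simp only [pairVal_eq]
  rw [applyFaces_false_fst', one_mul]

lemma F2 (x : Y) (t : List Y) (S' : Finset (Fin t.length)) :
    pairVal K Q (applyFaces K Q true
        (((insert 0 (S'ᶜ.map (Fin.succEmb t.length))).sort (· ≤ ·)).map Fin.val) (1, x :: t))
      = gg K Q x * pairVal K Q
          (applyFaces K Q true ((S'ᶜ.sort (· ≤ ·)).map Fin.val) (1, t)) := by
  obtain ⟨x', hEq, he, hg⟩ := applyFaces_true_shift (K := K) (Q := Q)
    ((S'ᶜ.sort (· ≤ ·)).map Fin.val) x t
  rw [Finset.sort_insert (· ≤ ·) (fun b _ => Fin.zero_le b) (zero_not_mem_map_succ S'ᶜ),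
    List.map_cons, sort_map_val_succ]
  show pairVal K Q (facePair K Q true 0
    (applyFaces K Q true (((S'ᶜ.sort (· ≤ ·)).map Fin.val).map (· + 1)) (1, x :: t))) = _
  rw [hEq, facePair_true_zero]
  simp only [pairVal_eq]
  rw [hg, mul_assoc]

lemma F4 (x : Y) (t : List Y) (S' : Finset (Fin t.length)) :
    pairVal K Q (applyFaces K Q true
        (((S'ᶜ.map (Fin.succEmb t.length)).sort (· ≤ ·)).map Fin.val) (1, x :: t))
      = ee K Q x * pairVal K Q
          (applyFaces K Q true ((S'ᶜ.sort (· ≤ ·)).map Fin.val) (1, t)) := by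
  obtain ⟨x', hEq, he, hg⟩ := applyFaces_true_shift (K := K) (Q := Q)
    ((S'ᶜ.sort (· ≤ ·)).map Fin.val) x t
  rw [sort_map_val_succ, hEq]
  simp only [pairVal_eq]
  rw [Emon_cons, ← mul_assoc, he, mul_assoc]

end Aux3
/-- The explicit formula for the coproduct of `B`:
`Δ(e_{x_1}⋯e_{x_n}) = Σ_{A ⊆ {1,…,n}} ε(A) δ_A^0(e_{x_1}⋯e_{x_n}) ⊗ δ_{Aᶜ}^1(e_{x_1}⋯e_{x_n})`. -/
theorem BAlg_coprod_explicit (k : Type*) [CommRing k] {X : Type*} (R : RackS X)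
    (μ : BAlg k R ⊗[k] BAlg k R →ₗ[k] BAlg k R ⊗[k] BAlg k R →ₗ[k] BAlg k R ⊗[k] BAlg k R)
    (hμ : IsKoszulMul k R μ)
    (Δ : BAlg k R →ₗ[k] BAlg k R ⊗[k] BAlg k R) (hΔ : IsBCoprod k R μ Δ)
    (l : List X) :
    Δ (Emon k R l) = ∑ S : Finset (Fin l.length),
      unshuffleSign k S •
        (pairVal k R (applyFaces k R false ((S.sort (· ≤ ·)).map Fin.val) (1, l))
          ⊗ₜ[k] pairVal k R (applyFaces k R true ((Sᶜ.sort (· ≤ ·)).map Fin.val) (1, l))) := by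
  classical
  induction l with
  | nil =>
    rw [Emon_nil, hΔ.1]
    simp only [List.length_nil]
    have huniq : (Finset.univ : Finset (Finset (Fin 0))) = {∅} := by
      apply Finset.eq_singleton_iff_unique_mem.2
      exact ⟨Finset.mem_univ _, fun S _ => Finset.eq_empty_of_isEmpty S⟩
    have hc : (∅ : Finset (Fin 0))ᶜ = ∅ := by
      rw [Finset.compl_empty]
      exact Finset.univ_eq_empty
    rw [huniq, Finset.sum_singleton, hc]
    simp only [Finset.sort_empty, List.map_nil]
    show _ = unshuffleSign k (∅ : Finset (Fin 0)) •
      (pairVal k R (1, ([] : List X)) ⊗ₜ[k] pairVal k R (1, ([] : List X)))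
    have hp : pairVal k R ((1 : BAlg k R), ([] : List X)) = 1 := by
      rw [pairVal_eq, Emon_nil, mul_one]
    have hs : unshuffleSign k (∅ : Finset (Fin 0)) = 1 := by
      unfold unshuffleSign
      simp
    rw [hp, hs, one_smul]
  | cons x t ih =>
    obtain ⟨hΔ1, hΔmul, hΔg, hΔe⟩ := hΔ
    rw [Emon_cons, hΔmul, hΔe, ih]
    rw [map_add, LinearMap.add_apply, map_sum, map_sum]
    simp only [map_smul]
    rw [← Finset.sum_add_distrib]
    simp only [List.length_cons]
    rw [← Equiv.sum_comp (splitE t.length)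
      (fun S => unshuffleSign k S •
        (pairVal k R (applyFaces k R false ((S.sort (· ≤ ·)).map Fin.val) (1, x :: t))
          ⊗ₜ[k] pairVal k R (applyFaces k R true ((Sᶜ.sort (· ≤ ·)).map Fin.val) (1, x :: t))))]
    rw [Fintype.sum_prod_type]
    simp only [Fintype.sum_bool]
    apply Finset.sum_congr rfl
    intro S' _
    rw [splitE_true, splitE_false, compl_insert_zero, compl_map_succ,
      unshuffleSign_insert, unshuffleSign_map, F1, F2, F3, F4]
    rw [hμ 0 (S'ᶜ.card) (ee k R x) (gg k R x) _ _ (gg_mem_Bdeg x) (P0_mem t S'),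
      hμ 1 (S'ᶜ.card) 1 (ee k R x) _ _ (ee_mem_Bdeg x) (P0_mem t S')]
    simp only [zero_mul, pow_zero, one_smul, one_mul, smul_smul]
    rw [add_comm]
    congr 1
    rw [mul_comm]
end

section
/- Let $X$ be a rack and $h : B \to B \otimes^D B$ the degree-one $A$-module map defined by $h(1) = 0$, $h(e_x) = e_x \otimes e_x$, and $h(e_{x_1}\cdots e_{x_n}) = \sum_{i=1}^n (-1)^{i-1} (\tau\Delta)(e_{x_1})\cdots(\tau\Delta)(e_{x_{i-1}})\, h(e_{x_i})\, \Delta(e_{x_{i+1}})\cdots\Delta(e_{x_n})$. Then for all homogeneous $a, b \in B$: $h(ab) = h(a)\Delta(b) + (-1)^{|a|}(\tau\Delta)(a) h(b)$. -/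
open scoped TensorProduct

variable (k : Type*) [CommRing k] {X : Type*} (R : RackS X)

/-- `τ` is the signed flip of `B ⊗ B`: `τ(a ⊗ b) = (-1)^{|a||b|} b ⊗ a` on homogeneous
elements. -/
def IsTauFlip (τ : BAlg k R ⊗[k] BAlg k R →ₗ[k] BAlg k R ⊗[k] BAlg k R) : Prop :=
  ∀ (m n : ℕ) (a b : BAlg k R), a ∈ Bdeg k R m → b ∈ Bdeg k R n →
    τ (a ⊗ₜ b) = ((-1 : k) ^ (m * n)) • (b ⊗ₜ[k] a)

/-- The product of a list of elements of `B ⊗ B` with respect to the multiplication `μ`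
(applied from the left, with empty product `1 ⊗ 1`). -/
noncomputable def muProd (k : Type*) [CommRing k] {X : Type*} (R : RackS X)
    (μ : BAlg k R ⊗[k] BAlg k R →ₗ[k] BAlg k R ⊗[k] BAlg k R →ₗ[k] BAlg k R ⊗[k] BAlg k R) :
    List (BAlg k R ⊗[k] BAlg k R) → BAlg k R ⊗[k] BAlg k R
  | [] => 1 ⊗ₜ 1
  | t :: ts => μ t (muProd k R μ ts)

/-- `h : B → B ⊗ᴰ B` is the degree-one `A`-module map with `h(1) = 0`,
`h(e_x) = e_x ⊗ e_x` (`A`-linearity for the diagonal action on `B ⊗ B`), given on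
monomials by
`h(e_{x_1}⋯e_{x_n}) = Σᵢ (-1)^{i-1} (τΔ)(e_{x_1})⋯(τΔ)(e_{x_{i-1}}) h(e_{x_i}) Δ(e_{x_{i+1}})⋯Δ(e_{x_n})`. -/
def IsHMap (μ : BAlg k R ⊗[k] BAlg k R →ₗ[k] BAlg k R ⊗[k] BAlg k R →ₗ[k] BAlg k R ⊗[k] BAlg k R)
    (τ : BAlg k R ⊗[k] BAlg k R →ₗ[k] BAlg k R ⊗[k] BAlg k R)
    (Δ : BAlg k R →ₗ[k] BAlg k R ⊗[k] BAlg k R)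
    (h : BAlg k R →ₗ[k] BAlg k R ⊗[k] BAlg k R) : Prop :=
  h 1 = 0 ∧
  (∀ x : X, h (ee k R x) = ee k R x ⊗ₜ ee k R x) ∧
  (∀ (x : X) (b : BAlg k R), h (gg k R x * b) = μ (gg k R x ⊗ₜ gg k R x) (h b)) ∧
  (∀ l : List X, h (Emon k R l) = ∑ i : Fin l.length, ((-1 : k) ^ (i : ℕ)) •
    muProd k R μ
      (((l.take (i : ℕ)).map fun z => τ (Δ (ee k R z)))
        ++ [h (ee k R (l.get i))]
        ++ ((l.drop ((i : ℕ) + 1)).map fun z => Δ (ee k R z))))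
namespace HLeibAux

noncomputable def Gmon (k : Type*) [CommRing k] {X : Type*} (R : RackS X) (gs : List X) :
    BAlg k R := (gs.map (gg k R)).prod

variable {k : Type*} [CommRing k] {X : Type*} {R : RackS X}

lemma gg_comm (x y : X) : gg k R x * gg k R y = gg k R y * gg k R (R.act x y) := by
  have := RingQuot.mkAlgHom_rel k (Brel.comm (k := k) (R := R) x y)
  simp only [map_mul] at this
  exact this.symm

lemma ee_gg_comm (x y : X) : ee k R x * gg k R y = gg k R y * ee k R (R.act x y) := by
  have := RingQuot.mkAlgHom_rel k (Brel.eact (k := k) (R := R) x y)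
  simp only [map_mul] at this
  exact this.symm

lemma mon_mem (l : List (X ⊕ X)) :
    (l.map (Sum.elim (gg k R) (ee k R))).prod ∈ Bdeg k R (l.countP (fun s => s.isRight)) :=
  Submodule.subset_span ⟨l, rfl, rfl⟩

lemma gg_mem (x : X) : gg k R x ∈ Bdeg k R 0 := by
  simpa using mon_mem (k := k) (R := R) [Sum.inl x]

lemma ee_mem (x : X) : ee k R x ∈ Bdeg k R 1 := by
  simpa using mon_mem (k := k) (R := R) [Sum.inr x]

lemma one_mem0 : (1 : BAlg k R) ∈ Bdeg k R 0 := by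
  simpa using mon_mem (k := k) (R := R) []

lemma Emon_nil : Emon k R ([] : List X) = 1 := rfl

lemma Emon_cons (x : X) (l : List X) : Emon k R (x :: l) = ee k R x * Emon k R l := by
  simp [Emon]

lemma Emon_append (l₁ l₂ : List X) : Emon k R (l₁ ++ l₂) = Emon k R l₁ * Emon k R l₂ := by
  simp [Emon]

lemma Gmon_nil : Gmon k R ([] : List X) = 1 := rfl

lemma Gmon_cons (x : X) (l : List X) : Gmon k R (x :: l) = gg k R x * Gmon k R l := by
  simp [Gmon]

lemma Emon_mem (l : List X) : Emon k R l ∈ Bdeg k R l.length := by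
  have h1 : ((l.map Sum.inr : List (X ⊕ X))).countP (fun s => s.isRight) = l.length := by
    rw [show l.length = (l.map (Sum.inr : X → X ⊕ X)).length by simp, List.countP_eq_length]
    intro a ha
    obtain ⟨x, -, rfl⟩ := List.mem_map.1 ha
    rfl
  have := mon_mem (k := k) (R := R) (l.map Sum.inr)
  rw [h1] at this
  simpa [Emon, List.map_map, Function.comp] using this

lemma Gmon_mem (l : List X) : Gmon k R l ∈ Bdeg k R 0 := by
  have h1 : ((l.map Sum.inl : List (X ⊕ X))).countP (fun s => s.isRight) = 0 := by
    rw [List.countP_eq_zero]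
    intro a ha
    obtain ⟨x, -, rfl⟩ := List.mem_map.1 ha
    simp
  have := mon_mem (k := k) (R := R) (l.map Sum.inl)
  rw [h1] at this
  simpa [Gmon, List.map_map, Function.comp] using this

/-- generic: spans multiply into a submodule if generators do -/
lemma span_mul_span_mem {A : Type*} [Ring A] [Algebra k A] {s t : Set A}
    {p : Submodule k A} (H : ∀ a ∈ s, ∀ b ∈ t, a * b ∈ p) :
    ∀ a ∈ Submodule.span k s, ∀ b ∈ Submodule.span k t, a * b ∈ p := by
  intro a ha
  induction ha using Submodule.span_induction with
  | mem a has =>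
    intro b hb
    induction hb using Submodule.span_induction with
    | mem b hbs => exact H a has b hbs
    | zero => simpa using p.zero_mem
    | add u v _ _ hu hv => rw [mul_add]; exact p.add_mem hu hv
    | smul c u _ hu => rw [mul_smul_comm]; exact p.smul_mem c hu
  | zero => intro b hb; simpa using p.zero_mem
  | add u v _ _ hu hv => intro b hb; rw [add_mul]; exact p.add_mem (hu b hb) (hv b hb)
  | smul c u _ hu => intro b hb; rw [smul_mul_assoc]; exact p.smul_mem c (hu b hb)

lemma Bdeg_mul_mem {m n : ℕ} {a b : BAlg k R} (ha : a ∈ Bdeg k R m) (hb : b ∈ Bdeg k R n) :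
    a * b ∈ Bdeg k R (m + n) := by
  refine span_mul_span_mem ?_ a ha b hb
  rintro _ ⟨l₁, rfl, rfl⟩ _ ⟨l₂, rfl, rfl⟩
  have : (l₁.map (Sum.elim (gg k R) (ee k R))).prod * (l₂.map (Sum.elim (gg k R) (ee k R))).prod
      = ((l₁ ++ l₂).map (Sum.elim (gg k R) (ee k R))).prod := by
    simp
  rw [this]
  simpa [List.countP_append] using mon_mem (k := k) (R := R) (l₁ ++ l₂)

lemma mem_span_mon (z : BAlg k R) :
    z ∈ Submodule.span k {w : BAlg k R | ∃ l : List (X ⊕ X),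
      w = (l.map (Sum.elim (gg k R) (ee k R))).prod} := by
  obtain ⟨f, rfl⟩ := RingQuot.mkAlgHom_surjective k (Brel k R) z
  induction f using FreeAlgebra.induction with
  | grade0 c =>
    have : (RingQuot.mkAlgHom k (Brel k R)) (algebraMap k _ c) = c • (1 : BAlg k R) := by
      rw [AlgHom.commutes, Algebra.algebraMap_eq_smul_one]
    rw [this]
    exact Submodule.smul_mem _ c (Submodule.subset_span ⟨[], by simp⟩)
  | grade1 s =>
    refine Submodule.subset_span ⟨[s], ?_⟩
    cases s <;> simp [gg, ee]
  | mul f g hf hg =>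
    rw [map_mul]
    refine span_mul_span_mem ?_ _ hf _ hg
    rintro _ ⟨l₁, rfl⟩ _ ⟨l₂, rfl⟩
    exact Submodule.subset_span ⟨l₁ ++ l₂, by simp⟩
  | add f g hf hg => rw [map_add]; exact Submodule.add_mem _ hf hg

/-- normal form: every monomial is `Gmon gs * Emon es`. -/
lemma normal_form (l : List (X ⊕ X)) : ∃ gs es : List X,
    es.length = l.countP (fun s => s.isRight) ∧
    (l.map (Sum.elim (gg k R) (ee k R))).prod = Gmon k R gs * Emon k R es := by
  induction l with
  | nil => exact ⟨[], [], by simp, by simp [Gmon_nil, Emon_nil]⟩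
  | cons s l ih =>
    obtain ⟨gs, es, hlen, heq⟩ := ih
    cases s with
    | inl x =>
      refine ⟨x :: gs, es, by simpa using hlen, ?_⟩
      simp only [List.map_cons, List.prod_cons, Sum.elim_inl, heq, Gmon_cons, mul_assoc]
    | inr x =>
      refine ⟨gs, (gs.foldl R.act x) :: es, by simp [hlen, List.countP_cons], ?_⟩
      have key : ∀ gs' : List X, ∀ x' : X,
          ee k R x' * Gmon k R gs' = Gmon k R gs' * ee k R (gs'.foldl R.act x') := by
        intro gs'
        induction gs' with
        | nil => simp [Gmon_nil]
        | cons y t iht =>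
          intro x'
          rw [Gmon_cons, ← mul_assoc, ee_gg_comm, mul_assoc, iht, ← mul_assoc, List.foldl_cons]
      simp only [List.map_cons, List.prod_cons, Sum.elim_inr, heq, Emon_cons, ← mul_assoc, key]

end HLeibAux
section Tensor

variable {k : Type*} [CommRing k] {X : Type*} {R : RackS X}
  {μ : BAlg k R ⊗[k] BAlg k R →ₗ[k] BAlg k R ⊗[k] BAlg k R →ₗ[k] BAlg k R ⊗[k] BAlg k R}
  {τ : BAlg k R ⊗[k] BAlg k R →ₗ[k] BAlg k R ⊗[k] BAlg k R}

namespace HLeibAux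

lemma tensor_induction {p : BAlg k R ⊗[k] BAlg k R → Prop}
    (hmem : ∀ (m n : ℕ) (a b : BAlg k R), a ∈ Bdeg k R m → b ∈ Bdeg k R n → p (a ⊗ₜ[k] b))
    (h0 : p 0) (hadd : ∀ u v, p u → p v → p (u + v))
    (hsmul : ∀ (c : k) (u), p u → p (c • u)) : ∀ u, p u := by
  set S : Set (BAlg k R ⊗[k] BAlg k R) :=
    {u | ∃ (m n : ℕ) (a b : BAlg k R), a ∈ Bdeg k R m ∧ b ∈ Bdeg k R n ∧ u = a ⊗ₜ[k] b} with hS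
  have key : ∀ a b : BAlg k R, (a ⊗ₜ[k] b) ∈ Submodule.span k S := by
    intro a b
    have ha := mem_span_mon a
    induction ha using Submodule.span_induction with
    | mem a has =>
      have hb := mem_span_mon b
      induction hb using Submodule.span_induction with
      | mem b hbs =>
        obtain ⟨l, rfl⟩ := has
        obtain ⟨l', rfl⟩ := hbs
        exact Submodule.subset_span ⟨_, _, _, _, mon_mem l, mon_mem l', rfl⟩
      | zero => rw [TensorProduct.tmul_zero]; exact Submodule.zero_mem _
      | add u v _ _ hu hv => rw [TensorProduct.tmul_add]; exact Submodule.add_mem _ hu hv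
      | smul c u _ hu => rw [TensorProduct.tmul_smul]; exact Submodule.smul_mem _ c hu
    | zero => rw [TensorProduct.zero_tmul]; exact Submodule.zero_mem _
    | add u v _ _ hu hv => rw [TensorProduct.add_tmul]; exact Submodule.add_mem _ hu hv
    | smul c u _ hu =>
      rw [TensorProduct.smul_tmul, TensorProduct.tmul_smul]; exact Submodule.smul_mem _ c hu
  have hspan : ∀ u : BAlg k R ⊗[k] BAlg k R, u ∈ Submodule.span k S := by
    intro u
    have hle : Submodule.span k {t : BAlg k R ⊗[k] BAlg k R | ∃ x y, x ⊗ₜ[k] y = t} ≤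
        Submodule.span k S := by
      rw [Submodule.span_le]
      rintro _ ⟨x, y, rfl⟩
      exact key x y
    refine hle ?_
    rw [TensorProduct.span_tmul_eq_top]
    trivial
  intro u
  induction hspan u using Submodule.span_induction with
  | mem u hu => obtain ⟨m, n, a, b, ha, hb, rfl⟩ := hu; exact hmem m n a b ha hb
  | zero => exact h0
  | add u v _ _ hu hv => exact hadd u v hu hv
  | smul c u _ hu => exact hsmul c u hu

lemma mu_one_right (hμ : IsKoszulMul k R μ) (u : BAlg k R ⊗[k] BAlg k R) :
    μ u ((1 : BAlg k R) ⊗ₜ[k] (1 : BAlg k R)) = u := by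
  induction u using tensor_induction with
  | hmem m n a b ha hb => rw [hμ n 0 a b 1 1 hb one_mem0]; simp
  | h0 => simp
  | hadd u v hu hv => rw [map_add, LinearMap.add_apply, hu, hv]
  | hsmul c u hu => rw [map_smul, LinearMap.smul_apply, hu]

lemma mu_one_left (hμ : IsKoszulMul k R μ) (u : BAlg k R ⊗[k] BAlg k R) :
    μ ((1 : BAlg k R) ⊗ₜ[k] (1 : BAlg k R)) u = u := by
  induction u using tensor_induction with
  | hmem m n a b ha hb => rw [hμ 0 m 1 1 a b one_mem0 ha]; simp
  | h0 => simp
  | hadd u v hu hv => rw [map_add, hu, hv]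
  | hsmul c u hu => rw [map_smul, hu]

lemma neg_one_pow_congr {p q : ℕ} (hpq : p = q) : ((-1 : k) ^ p) = (-1 : k) ^ q := by rw [hpq]

lemma mu_assoc (hμ : IsKoszulMul k R μ) (u v w : BAlg k R ⊗[k] BAlg k R) :
    μ u (μ v w) = μ (μ u v) w := by
  induction u using tensor_induction with
  | h0 => simp
  | hadd u u' hu hu' => simp only [map_add, LinearMap.add_apply, hu, hu']
  | hsmul c u hu => simp only [map_smul, LinearMap.smul_apply, hu]
  | hmem ma mb a b ha hb =>
    induction v using tensor_induction with
    | h0 => simp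
    | hadd v v' hv hv' => simp only [map_add, LinearMap.add_apply, hv, hv']
    | hsmul c v hv => simp only [map_smul, LinearMap.smul_apply, hv]
    | hmem mc md c d hc hd =>
      induction w using tensor_induction with
      | h0 => simp
      | hadd w w' hw hw' => simp only [map_add, LinearMap.add_apply, hw, hw']
      | hsmul cc w hw => simp only [map_smul, LinearMap.smul_apply, hw]
      | hmem me mf e f he hf =>
        rw [hμ md me c d e f hd he, hμ mb mc a b c d hb hc]
        simp only [map_smul, LinearMap.smul_apply]
        rw [hμ mb (mc + me) a b _ _ hb (Bdeg_mul_mem hc he),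
          hμ (mb + md) me _ _ e f (Bdeg_mul_mem hb hd) he, smul_smul, smul_smul,
          ← pow_add, ← pow_add, neg_one_pow_congr (k := k)
            (show md * me + mb * (mc + me) = mb * mc + (mb + md) * me by ring),
          mul_assoc a, mul_assoc b]

lemma tau_one (hτ : IsTauFlip k R τ) :
    τ ((1 : BAlg k R) ⊗ₜ[k] (1 : BAlg k R)) = (1 : BAlg k R) ⊗ₜ[k] (1 : BAlg k R) := by
  rw [hτ 0 0 1 1 one_mem0 one_mem0]; simp

lemma neg_one_pow_add_two_mul (p q : ℕ) : ((-1 : k) ^ (p + 2 * q)) = (-1 : k) ^ p := by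
  rw [pow_add, pow_mul, neg_one_sq, one_pow, mul_one]

lemma tau_mu (hμ : IsKoszulMul k R μ) (hτ : IsTauFlip k R τ)
    (u v : BAlg k R ⊗[k] BAlg k R) : τ (μ u v) = μ (τ u) (τ v) := by
  induction u using tensor_induction with
  | h0 => simp
  | hadd u u' hu hu' => simp only [map_add, LinearMap.add_apply, hu, hu']
  | hsmul c u hu => simp only [map_smul, LinearMap.smul_apply, hu]
  | hmem ma mb a b ha hb =>
    induction v using tensor_induction with
    | h0 => simp
    | hadd v v' hv hv' => simp only [map_add, LinearMap.add_apply, hv, hv']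
    | hsmul c v hv => simp only [map_smul, LinearMap.smul_apply, hv]
    | hmem mc md c d hc hd =>
      rw [hμ mb mc a b c d hb hc, hτ ma mb a b ha hb, hτ mc md c d hc hd]
      simp only [map_smul, LinearMap.smul_apply]
      rw [hτ (ma + mc) (mb + md) _ _ (Bdeg_mul_mem ha hc) (Bdeg_mul_mem hb hd),
        hμ ma md b a d c ha hd, smul_smul, smul_smul, smul_smul,
        ← pow_add, ← pow_add, ← pow_add,
        neg_one_pow_congr (k := k) (show mb * mc + (ma + mc) * (mb + md)
          = (ma * mb + (mc * md + ma * md)) + 2 * (mb * mc) by ring),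
        neg_one_pow_add_two_mul, neg_one_pow_congr (k := k)
          (show ma * mb + (mc * md + ma * md) = mc * md + ma * mb + ma * md by ring)]

end HLeibAux

end Tensor
section Part3

variable {k : Type*} [CommRing k] {X : Type*} {R : RackS X}
  {μ : BAlg k R ⊗[k] BAlg k R →ₗ[k] BAlg k R ⊗[k] BAlg k R →ₗ[k] BAlg k R ⊗[k] BAlg k R}
  {τ : BAlg k R ⊗[k] BAlg k R →ₗ[k] BAlg k R ⊗[k] BAlg k R}
  {Δ : BAlg k R →ₗ[k] BAlg k R ⊗[k] BAlg k R}
  {h : BAlg k R →ₗ[k] BAlg k R ⊗[k] BAlg k R}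

namespace HLeibAux

lemma muProd_nil : muProd k R μ [] = (1 : BAlg k R) ⊗ₜ[k] (1 : BAlg k R) := rfl

lemma muProd_cons (t : BAlg k R ⊗[k] BAlg k R) (ts : List (BAlg k R ⊗[k] BAlg k R)) :
    muProd k R μ (t :: ts) = μ t (muProd k R μ ts) := rfl

lemma muProd_append (hμ : IsKoszulMul k R μ) (A B : List (BAlg k R ⊗[k] BAlg k R)) :
    muProd k R μ (A ++ B) = μ (muProd k R μ A) (muProd k R μ B) := by
  induction A with
  | nil => rw [List.nil_append, muProd_nil, mu_one_left hμ]
  | cons t ts ih => rw [List.cons_append, muProd_cons, muProd_cons, ih, mu_assoc hμ]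

lemma delta_Emon (hΔ : IsBCoprod k R μ Δ) (l : List X) :
    Δ (Emon k R l) = muProd k R μ (l.map fun z => Δ (ee k R z)) := by
  induction l with
  | nil => rw [Emon_nil, hΔ.1, List.map_nil, muProd_nil]
  | cons x l ih => rw [Emon_cons, hΔ.2.1, ih, List.map_cons, muProd_cons]

lemma tau_muProd (hμ : IsKoszulMul k R μ) (hτ : IsTauFlip k R τ)
    (L : List (BAlg k R ⊗[k] BAlg k R)) :
    τ (muProd k R μ L) = muProd k R μ (L.map τ) := by
  induction L with
  | nil => rw [muProd_nil, List.map_nil, muProd_nil]; exact tau_one hτ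
  | cons t ts ih => rw [muProd_cons, tau_mu hμ hτ, ih, List.map_cons, muProd_cons]

lemma tau_delta_Emon (hμ : IsKoszulMul k R μ) (hτ : IsTauFlip k R τ)
    (hΔ : IsBCoprod k R μ Δ) (l : List X) :
    τ (Δ (Emon k R l)) = muProd k R μ (l.map fun z => τ (Δ (ee k R z))) := by
  rw [delta_Emon hΔ, tau_muProd hμ hτ, List.map_map]
  rfl

lemma delta_Gmon (hμ : IsKoszulMul k R μ) (hΔ : IsBCoprod k R μ Δ) (gs : List X) :
    Δ (Gmon k R gs) = Gmon k R gs ⊗ₜ[k] Gmon k R gs := by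
  induction gs with
  | nil => rw [Gmon_nil, hΔ.1]
  | cons y t ih =>
    rw [Gmon_cons, hΔ.2.1, hΔ.2.2.1, ih, hμ 0 0 _ _ _ _ (gg_mem y) (Gmon_mem t)]
    simp [Gmon_cons]

lemma h_cons (hμ : IsKoszulMul k R μ) (hΔ : IsBCoprod k R μ Δ) (hh : IsHMap k R μ τ Δ h)
    (x : X) (l : List X) :
    h (Emon k R (x :: l)) = μ (h (ee k R x)) (Δ (Emon k R l))
      - μ (τ (Δ (ee k R x))) (h (Emon k R l)) := by
  rw [hh.2.2.2 (x :: l)]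
  simp only [List.length_cons]
  rw [Fin.sum_univ_succ]
  simp only [Fin.val_zero, pow_zero, one_smul, List.take_zero, List.drop_succ_cons,
    List.take_succ_cons, List.nil_append, List.map_cons, Fin.val_succ, List.map_nil,
    List.cons_append, List.singleton_append, List.drop_zero, List.get_cons_zero,
    List.get_cons_succ']
  rw [muProd_cons, ← delta_Emon hΔ]
  have hR : (∑ j : Fin l.length, ((-1 : k) ^ ((j : ℕ) + 1)) • muProd k R μ
      (τ (Δ (ee k R x)) :: ((l.take (j : ℕ)).map (fun z => τ (Δ (ee k R z)))
        ++ [h (ee k R (l.get j))] ++ (l.drop ((j : ℕ) + 1)).map fun z => Δ (ee k R z))))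
      = - (μ (τ (Δ (ee k R x)))) (h (Emon k R l)) := by
    rw [hh.2.2.2 l, map_sum, ← Finset.sum_neg_distrib (G := BAlg k R ⊗[k] BAlg k R)]
    refine Finset.sum_congr rfl fun j _ => ?_
    rw [map_smul, muProd_cons, pow_succ, mul_neg_one, neg_smul (M := BAlg k R ⊗[k] BAlg k R)]
  rw [hR, sub_eq_add_neg]

end HLeibAux

end Part3
section Part4

variable {k : Type*} [CommRing k] {X : Type*} {R : RackS X}
  {μ : BAlg k R ⊗[k] BAlg k R →ₗ[k] BAlg k R ⊗[k] BAlg k R →ₗ[k] BAlg k R ⊗[k] BAlg k R}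
  {τ : BAlg k R ⊗[k] BAlg k R →ₗ[k] BAlg k R ⊗[k] BAlg k R}
  {Δ : BAlg k R →ₗ[k] BAlg k R ⊗[k] BAlg k R}
  {h : BAlg k R →ₗ[k] BAlg k R ⊗[k] BAlg k R}

namespace HLeibAux

lemma h_append (hμ : IsKoszulMul k R μ) (hτ : IsTauFlip k R τ) (hΔ : IsBCoprod k R μ Δ)
    (hh : IsHMap k R μ τ Δ h) (l1 l2 : List X) :
    h (Emon k R (l1 ++ l2)) = μ (h (Emon k R l1)) (Δ (Emon k R l2))
      + ((-1 : k) ^ l1.length) • μ (τ (Δ (Emon k R l1))) (h (Emon k R l2)) := by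
  induction l1 with
  | nil =>
    rw [List.nil_append, Emon_nil, hh.1, hΔ.1, tau_one hτ]
    simp only [map_zero, LinearMap.zero_apply, zero_add, List.length_nil, pow_zero, one_smul,
      mu_one_left hμ]
  | cons x l1 ih =>
    rw [List.cons_append, h_cons hμ hΔ hh x (l1 ++ l2), ih, Emon_append, hΔ.2.1]
    rw [map_add, map_smul]
    rw [mu_assoc hμ, mu_assoc hμ, mu_assoc hμ]
    rw [← tau_mu hμ hτ, ← hΔ.2.1, ← Emon_cons]
    rw [h_cons hμ hΔ hh x l1]
    have hs : ∀ a b c : BAlg k R ⊗[k] BAlg k R, μ (a - b) c = μ a c - μ b c := by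
      intro a b c; rw [eq_sub_iff_add_eq, ← LinearMap.add_apply, ← map_add, sub_add_cancel]
    rw [hs]
    rw [List.length_cons, pow_succ, mul_neg_one, neg_smul (M := BAlg k R ⊗[k] BAlg k R)]
    abel

end HLeibAux

end Part4
section Part5

variable {k : Type*} [CommRing k] {X : Type*} {R : RackS X}
  {μ : BAlg k R ⊗[k] BAlg k R →ₗ[k] BAlg k R ⊗[k] BAlg k R →ₗ[k] BAlg k R ⊗[k] BAlg k R}
  {τ : BAlg k R ⊗[k] BAlg k R →ₗ[k] BAlg k R ⊗[k] BAlg k R}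
  {Δ : BAlg k R →ₗ[k] BAlg k R ⊗[k] BAlg k R}
  {h : BAlg k R →ₗ[k] BAlg k R ⊗[k] BAlg k R}

namespace HLeibAux

lemma ee_gmon (gs : List X) (x : X) :
    ee k R x * Gmon k R gs = Gmon k R gs * ee k R (gs.foldl R.act x) := by
  induction gs generalizing x with
  | nil => simp [Gmon_nil]
  | cons y t iht =>
    rw [Gmon_cons, ← mul_assoc, ee_gg_comm, mul_assoc, iht, ← mul_assoc, List.foldl_cons]

lemma Emon_gmon (gs es : List X) :
    Emon k R es * Gmon k R gs
      = Gmon k R gs * Emon k R (es.map fun x => gs.foldl R.act x) := by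
  induction es with
  | nil => simp [Emon_nil]
  | cons z es ih =>
    rw [List.map_cons, Emon_cons, Emon_cons, mul_assoc, ih, ← mul_assoc, ee_gmon, mul_assoc]

lemma tau_delta_ee (hτ : IsTauFlip k R τ) (hΔ : IsBCoprod k R μ Δ) (z : X) :
    τ (Δ (ee k R z)) = gg k R z ⊗ₜ[k] ee k R z + ee k R z ⊗ₜ[k] (1 : BAlg k R) := by
  rw [hΔ.2.2.2, map_add, hτ 1 0 _ _ (ee_mem z) (gg_mem z), hτ 0 1 1 _ one_mem0 (ee_mem z)]
  simp

lemma tau_gg_gmon (hτ : IsTauFlip k R τ) (gs : List X) :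
    τ (Gmon k R gs ⊗ₜ[k] Gmon k R gs) = Gmon k R gs ⊗ₜ[k] Gmon k R gs := by
  rw [hτ 0 0 _ _ (Gmon_mem gs) (Gmon_mem gs)]
  simp

lemma comm_delta_ee (hμ : IsKoszulMul k R μ) (hΔ : IsBCoprod k R μ Δ) (z y : X) :
    μ (Δ (ee k R z)) (gg k R y ⊗ₜ[k] gg k R y)
      = μ (gg k R y ⊗ₜ[k] gg k R y) (Δ (ee k R (R.act z y))) := by
  rw [hΔ.2.2.2, hΔ.2.2.2, map_add, LinearMap.add_apply, map_add,
    hμ 0 0 _ _ _ _ (gg_mem z) (gg_mem y), hμ 1 0 _ _ _ _ (ee_mem z) (gg_mem y),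
    hμ 0 1 _ _ _ _ (gg_mem y) (ee_mem (R.act z y)), hμ 0 0 _ _ _ _ (gg_mem y) one_mem0]
  simp only [Nat.mul_zero, Nat.zero_mul, pow_zero, one_smul, one_mul, mul_one,
    ee_gg_comm z y, gg_comm z y]

lemma comm_tau_delta_ee (hμ : IsKoszulMul k R μ) (hτ : IsTauFlip k R τ)
    (hΔ : IsBCoprod k R μ Δ) (z y : X) :
    μ (τ (Δ (ee k R z))) (gg k R y ⊗ₜ[k] gg k R y)
      = μ (gg k R y ⊗ₜ[k] gg k R y) (τ (Δ (ee k R (R.act z y)))) := by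
  rw [tau_delta_ee hτ hΔ, tau_delta_ee hτ hΔ, map_add, LinearMap.add_apply, map_add,
    hμ 1 0 _ _ _ _ (ee_mem z) (gg_mem y), hμ 0 0 _ _ _ _ one_mem0 (gg_mem y),
    hμ 0 0 _ _ _ _ (gg_mem y) (gg_mem (R.act z y)), hμ 0 1 _ _ _ _ (gg_mem y) (ee_mem (R.act z y))]
  simp only [Nat.mul_zero, Nat.zero_mul, pow_zero, one_smul, one_mul, mul_one,
    ee_gg_comm z y, gg_comm z y]

lemma comm_h_ee (hμ : IsKoszulMul k R μ) (hh : IsHMap k R μ τ Δ h) (z y : X) :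
    μ (h (ee k R z)) (gg k R y ⊗ₜ[k] gg k R y)
      = μ (gg k R y ⊗ₜ[k] gg k R y) (h (ee k R (R.act z y))) := by
  rw [hh.2.1, hh.2.1, hμ 1 0 _ _ _ _ (ee_mem z) (gg_mem y),
    hμ 0 1 _ _ _ _ (gg_mem y) (ee_mem (R.act z y))]
  simp only [Nat.mul_zero, Nat.zero_mul, pow_zero, one_smul, ee_gg_comm z y]

lemma comm_delta_Emon (hμ : IsKoszulMul k R μ) (hΔ : IsBCoprod k R μ Δ)
    (es : List X) (y : X) :
    μ (Δ (Emon k R es)) (gg k R y ⊗ₜ[k] gg k R y)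
      = μ (gg k R y ⊗ₜ[k] gg k R y) (Δ (Emon k R (es.map fun x => R.act x y))) := by
  induction es with
  | nil => rw [List.map_nil, Emon_nil, hΔ.1, mu_one_left hμ, mu_one_right hμ]
  | cons z es ih =>
    rw [List.map_cons, Emon_cons, Emon_cons, hΔ.2.1, hΔ.2.1, ← mu_assoc hμ, ih,
      mu_assoc hμ, comm_delta_ee hμ hΔ z y, ← mu_assoc hμ]

lemma comm_tau_delta_Emon (hμ : IsKoszulMul k R μ) (hτ : IsTauFlip k R τ)
    (hΔ : IsBCoprod k R μ Δ) (es : List X) (y : X) :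
    μ (τ (Δ (Emon k R es))) (gg k R y ⊗ₜ[k] gg k R y)
      = μ (gg k R y ⊗ₜ[k] gg k R y) (τ (Δ (Emon k R (es.map fun x => R.act x y)))) := by
  induction es with
  | nil =>
    rw [List.map_nil, Emon_nil, hΔ.1, tau_one hτ, mu_one_left hμ, mu_one_right hμ]
  | cons z es ih =>
    rw [List.map_cons, Emon_cons, Emon_cons, hΔ.2.1, hΔ.2.1, tau_mu hμ hτ, tau_mu hμ hτ,
      ← mu_assoc hμ, ih, mu_assoc hμ, comm_tau_delta_ee hμ hτ hΔ z y, ← mu_assoc hμ]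

lemma comm_h_Emon (hμ : IsKoszulMul k R μ) (hτ : IsTauFlip k R τ)
    (hΔ : IsBCoprod k R μ Δ) (hh : IsHMap k R μ τ Δ h) (es : List X) (y : X) :
    μ (h (Emon k R es)) (gg k R y ⊗ₜ[k] gg k R y)
      = μ (gg k R y ⊗ₜ[k] gg k R y) (h (Emon k R (es.map fun x => R.act x y))) := by
  induction es with
  | nil => rw [List.map_nil, Emon_nil, hh.1, map_zero, LinearMap.zero_apply, map_zero]
  | cons z es ih =>
    have hs : ∀ a b c : BAlg k R ⊗[k] BAlg k R, μ (a - b) c = μ a c - μ b c := by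
      intro a b c; rw [eq_sub_iff_add_eq, ← LinearMap.add_apply, ← map_add, sub_add_cancel]
    rw [List.map_cons, h_cons hμ hΔ hh, h_cons hμ hΔ hh, hs,
      map_sub, ← mu_assoc hμ, ← mu_assoc hμ, comm_delta_Emon hμ hΔ es y, ih,
      mu_assoc hμ, mu_assoc hμ, comm_h_ee hμ hh z y, comm_tau_delta_ee hμ hτ hΔ z y,
      ← mu_assoc hμ, ← mu_assoc hμ]

lemma commG_gen (hμ : IsKoszulMul k R μ) (F : List X → BAlg k R ⊗[k] BAlg k R)
    (hF : ∀ es y, μ (F es) (gg k R y ⊗ₜ[k] gg k R y)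
      = μ (gg k R y ⊗ₜ[k] gg k R y) (F (es.map fun x => R.act x y))) :
    ∀ (gs : List X) (es : List X), μ (F es) (Gmon k R gs ⊗ₜ[k] Gmon k R gs)
      = μ (Gmon k R gs ⊗ₜ[k] Gmon k R gs) (F (es.map fun x => gs.foldl R.act x)) := by
  intro gs
  induction gs with
  | nil =>
    intro es
    rw [Gmon_nil, mu_one_left hμ, mu_one_right hμ]
    simp
  | cons y gs ih =>
    intro es
    have hg : Gmon k R (y :: gs) ⊗ₜ[k] Gmon k R (y :: gs)
        = μ (gg k R y ⊗ₜ[k] gg k R y) (Gmon k R gs ⊗ₜ[k] Gmon k R gs) := by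
      rw [hμ 0 0 _ _ _ _ (gg_mem y) (Gmon_mem gs)]
      simp [Gmon_cons]
    rw [hg, mu_assoc hμ, hF es y, ← mu_assoc hμ, ih, List.map_map, mu_assoc hμ, ← hg]
    have hcomp : ((fun x => List.foldl R.act x gs) ∘ fun x => R.act x y)
        = fun x => List.foldl R.act x (y :: gs) := rfl
    rw [hcomp]

lemma h_gmon (hμ : IsKoszulMul k R μ) (hh : IsHMap k R μ τ Δ h) (gs : List X) (b : BAlg k R) :
    h (Gmon k R gs * b) = μ (Gmon k R gs ⊗ₜ[k] Gmon k R gs) (h b) := by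
  induction gs generalizing b with
  | nil => rw [Gmon_nil, one_mul, mu_one_left hμ]
  | cons y gs ih =>
    rw [Gmon_cons, mul_assoc, hh.2.2.1, ih, mu_assoc hμ,
      hμ 0 0 _ _ _ _ (gg_mem y) (Gmon_mem gs)]
    simp [Gmon_cons]

end HLeibAux

end Part5
section Part6

variable {k : Type*} [CommRing k] {X : Type*} {R : RackS X}
  {μ : BAlg k R ⊗[k] BAlg k R →ₗ[k] BAlg k R ⊗[k] BAlg k R →ₗ[k] BAlg k R ⊗[k] BAlg k R}
  {τ : BAlg k R ⊗[k] BAlg k R →ₗ[k] BAlg k R ⊗[k] BAlg k R}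
  {Δ : BAlg k R →ₗ[k] BAlg k R ⊗[k] BAlg k R}
  {h : BAlg k R →ₗ[k] BAlg k R ⊗[k] BAlg k R}

namespace HLeibAux

lemma main_norm (hμ : IsKoszulMul k R μ) (hτ : IsTauFlip k R τ) (hΔ : IsBCoprod k R μ Δ)
    (hh : IsHMap k R μ τ Δ h) (gs es gs' es' : List X) :
    h ((Gmon k R gs * Emon k R es) * (Gmon k R gs' * Emon k R es'))
      = μ (h (Gmon k R gs * Emon k R es)) (Δ (Gmon k R gs' * Emon k R es'))
        + ((-1 : k) ^ es.length) •
          μ (τ (Δ (Gmon k R gs * Emon k R es))) (h (Gmon k R gs' * Emon k R es')) := by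
  set σes : List X := es.map (fun x => gs'.foldl R.act x) with hσ
  have hlen : σes.length = es.length := by simp [hσ]
  have hprod : (Gmon k R gs * Emon k R es) * (Gmon k R gs' * Emon k R es')
      = Gmon k R gs * (Gmon k R gs' * Emon k R (σes ++ es')) := by
    rw [Emon_append, mul_assoc, ← mul_assoc (Emon k R es), Emon_gmon, ← hσ,
      mul_assoc (Gmon k R gs')]
  have L : h ((Gmon k R gs * Emon k R es) * (Gmon k R gs' * Emon k R es'))
      = μ (Gmon k R gs ⊗ₜ[k] Gmon k R gs) (μ (Gmon k R gs' ⊗ₜ[k] Gmon k R gs')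
          (μ (h (Emon k R σes)) (Δ (Emon k R es'))
            + ((-1 : k) ^ es.length) • μ (τ (Δ (Emon k R σes))) (h (Emon k R es')))) := by
    rw [hprod, h_gmon hμ hh, h_gmon hμ hh, h_append hμ hτ hΔ hh, hlen]
  have R1 : μ (h (Gmon k R gs * Emon k R es)) (Δ (Gmon k R gs' * Emon k R es'))
      = μ (Gmon k R gs ⊗ₜ[k] Gmon k R gs) (μ (Gmon k R gs' ⊗ₜ[k] Gmon k R gs')
          (μ (h (Emon k R σes)) (Δ (Emon k R es')))) := by
    rw [h_gmon hμ hh, hΔ.2.1, delta_Gmon hμ hΔ, ← mu_assoc hμ, mu_assoc hμ (h (Emon k R es)),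
      commG_gen hμ (fun es => h (Emon k R es)) (fun es y => comm_h_Emon hμ hτ hΔ hh es y) gs' es,
      ← hσ, ← mu_assoc hμ (Gmon k R gs' ⊗ₜ[k] Gmon k R gs')]
  have R2 : μ (τ (Δ (Gmon k R gs * Emon k R es))) (h (Gmon k R gs' * Emon k R es'))
      = μ (Gmon k R gs ⊗ₜ[k] Gmon k R gs) (μ (Gmon k R gs' ⊗ₜ[k] Gmon k R gs')
          (μ (τ (Δ (Emon k R σes))) (h (Emon k R es')))) := by
    rw [hΔ.2.1, delta_Gmon hμ hΔ, tau_mu hμ hτ, tau_gg_gmon hτ, h_gmon hμ hh,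
      ← mu_assoc hμ, mu_assoc hμ (τ (Δ (Emon k R es))),
      commG_gen hμ (fun es => τ (Δ (Emon k R es)))
        (fun es y => comm_tau_delta_Emon hμ hτ hΔ es y) gs' es,
      ← hσ, ← mu_assoc hμ (Gmon k R gs' ⊗ₜ[k] Gmon k R gs')]
  rw [L, R1, R2]
  simp only [map_add, map_smul]

lemma main_a (hμ : IsKoszulMul k R μ) (hτ : IsTauFlip k R τ) (hΔ : IsBCoprod k R μ Δ)
    (hh : IsHMap k R μ τ Δ h) (gs es : List X) (b : BAlg k R) :
    h ((Gmon k R gs * Emon k R es) * b)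
      = μ (h (Gmon k R gs * Emon k R es)) (Δ b)
        + ((-1 : k) ^ es.length) • μ (τ (Δ (Gmon k R gs * Emon k R es))) (h b) := by
  have hb := mem_span_mon b
  induction hb using Submodule.span_induction with
  | mem b hbmem =>
    obtain ⟨l', rfl⟩ := hbmem
    obtain ⟨gs', es', -, heq'⟩ := normal_form (k := k) (R := R) l'
    rw [heq']
    exact main_norm hμ hτ hΔ hh gs es gs' es'
  | zero => simp
  | add u v _ _ hu hv =>
    rw [mul_add, map_add, hu, hv, map_add, map_add]
    simp only [map_add, smul_add]
    abel
  | smul c u _ hu =>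
    rw [mul_smul_comm]
    simp only [map_smul, hu, smul_add, smul_smul]
    rw [mul_comm c ((-1 : k) ^ es.length)]

end HLeibAux

end Part6

/-- The map `h` satisfies the twisted Leibniz rule
`h(ab) = h(a) Δ(b) + (-1)^{|a|} (τΔ)(a) h(b)` for `a` homogeneous. -/
theorem hMap_twisted_leibniz (k : Type*) [CommRing k] {X : Type*} (R : RackS X)
    (μ : BAlg k R ⊗[k] BAlg k R →ₗ[k] BAlg k R ⊗[k] BAlg k R →ₗ[k] BAlg k R ⊗[k] BAlg k R)
    (hμ : IsKoszulMul k R μ)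
    (τ : BAlg k R ⊗[k] BAlg k R →ₗ[k] BAlg k R ⊗[k] BAlg k R) (hτ : IsTauFlip k R τ)
    (Δ : BAlg k R →ₗ[k] BAlg k R ⊗[k] BAlg k R) (hΔ : IsBCoprod k R μ Δ)
    (h : BAlg k R →ₗ[k] BAlg k R ⊗[k] BAlg k R) (hh : IsHMap k R μ τ Δ h) :
    ∀ (m : ℕ) (a b : BAlg k R), a ∈ Bdeg k R m →
      h (a * b) = μ (h a) (Δ b) + ((-1 : k) ^ m) • μ (τ (Δ a)) (h b) := by
  intro m a b ha
  induction ha using Submodule.span_induction with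
  | mem a hamem =>
    obtain ⟨l, hcount, rfl⟩ := hamem
    obtain ⟨gs, es, hlen, heq⟩ := HLeibAux.normal_form (k := k) (R := R) l
    rw [heq, show m = es.length from (hlen.trans hcount).symm]
    exact HLeibAux.main_a hμ hτ hΔ hh gs es b
  | zero => simp
  | add u v _ _ hu hv =>
    simp only [add_mul, map_add, LinearMap.add_apply, hu, hv, smul_add]
    abel
  | smul c u _ hu =>
    simp only [smul_mul_assoc, map_smul, LinearMap.smul_apply, hu, smul_add, smul_smul]
    rw [mul_comm c ((-1 : k) ^ m)]
end
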